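/- arXiv:0803.4114 — 8 statements merged into one kernel-verified Lean document; each statement's English description precedes it below -/
import Mathlib

section
/- The lower central series {Fₙ} of any free group F has trivial intersection: ⋂ₙ Fₙ = {e}. -/
/-!
Send a generator `x` to `1 + X_x` in the free algebra `ℤ⟨X_α⟩` modulo the ideal spanned by
the words in which some letter is immediately repeated. There `X_x * X_x = 0`, so
`x ^ e ↦ 1 + e X_x`, and the units congruent to `1` modulo words of length `≥ k` form a
filtration whose commutators add degrees; hence the `n`-th term of the lower central series lands
in degree `≥ n + 1`. A nontrivial `g` is a reduced product of syllables `x₁ ^ e₁ ⋯ x_s ^ e_s`,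
and the coefficient of the word `x₁ ⋯ x_s` (no repeated letter, length `s`) in its image is
`e₁ ⋯ e_s ≠ 0`, so `g` is not in the `s`-th term.
-/

open MonoidAlgebra
open scoped commutatorElement

noncomputable section

-- Mathlib's `IsRingFiltration` is increasing; this is the decreasing notion, with `D 0 = ⊤`.
structure IsDescendingRingFiltration {S : Type*} [Ring S] (D : ℕ → AddSubgroup S) : Prop where
  antitone : Antitone D
  mem_zero (a : S) : a ∈ D 0
  mul_mem {j k : ℕ} {a b : S} : a ∈ D j → b ∈ D k → a * b ∈ D (j + k)

namespace IsDescendingRingFiltration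

variable {S : Type*} [Ring S] {D : ℕ → AddSubgroup S}

def unitsSubgroup (hD : IsDescendingRingFiltration D) (k : ℕ) : Subgroup Sˣ where
  carrier := {u | (u : S) - 1 ∈ D k}
  one_mem' := by simp
  mul_mem' {u v} hu hv := by
    have h : ((u * v : Sˣ) : S) - 1 = (u - 1) * (v - 1) + (u - 1) + (v - 1) := by
      push_cast; noncomm_ring
    rw [Set.mem_ofPred_eq, h]
    exact add_mem (add_mem (hD.antitone le_add_self (hD.mul_mem hu hv)) hu) hv
  inv_mem' {u} hu := by
    have h : ((u⁻¹ : Sˣ) : S) - 1 = -((u⁻¹ : Sˣ) * (u - 1)) := by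
      rw [mul_sub, Units.inv_mul, mul_one, neg_sub]
    rw [Set.mem_ofPred_eq, h]
    simpa using neg_mem (hD.mul_mem (hD.mem_zero _) hu)

lemma mem_unitsSubgroup (hD : IsDescendingRingFiltration D) {k : ℕ} {u : Sˣ} :
    u ∈ hD.unitsSubgroup k ↔ (u : S) - 1 ∈ D k := Iff.rfl

lemma commutator_mem_unitsSubgroup (hD : IsDescendingRingFiltration D) {j k : ℕ} {u v : Sˣ}
    (hu : u ∈ hD.unitsSubgroup j) (hv : v ∈ hD.unitsSubgroup k) :
    ⁅u, v⁆ ∈ hD.unitsSubgroup (j + k) := by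
  have h : ((⁅u, v⁆ : Sˣ) : S) - 1 =
      ((u - 1) * (v - 1) - (v - 1) * (u - 1)) * ((u⁻¹ * v⁻¹ : Sˣ) : S) := by
    have hvu : (v : S) * u * ((u⁻¹ * v⁻¹ : Sˣ) : S) = 1 := by
      simp [mul_assoc]
    rw [show ((u - 1) * (v - 1) - (v - 1) * (u - 1) : S) = u * v - v * u by noncomm_ring,
      sub_mul, hvu, commutatorElement_def]
    simp [mul_assoc]
  rw [mem_unitsSubgroup, h]
  simpa using hD.mul_mem (sub_mem (hD.mul_mem hu hv) (add_comm j k ▸ hD.mul_mem hv hu))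
    (hD.mem_zero _)

lemma lowerCentralSeries_le_comap (hD : IsDescendingRingFiltration D) {G : Type*} [Group G]
    (μ : G →* Sˣ) (hμ : ∀ g, μ g ∈ hD.unitsSubgroup 1) (n : ℕ) :
    (⊤ : Subgroup G).lowerCentralSeries n ≤ (hD.unitsSubgroup (n + 1)).comap μ :=
  Subgroup.descending_central_series_ge_lower (fun n => (hD.unitsSubgroup (n + 1)).comap μ)
    ⟨eq_top_iff.2 fun g _ => hμ g, fun x n hx g => by
      simpa [map_commutatorElement] using hD.commutator_mem_unitsSubgroup hx (hμ g)⟩ n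

lemma map (hD : IsDescendingRingFiltration D) {T : Type*} [Ring T] (f : S →+* T)
    (hf : Function.Surjective f) :
    IsDescendingRingFiltration fun k => (D k).map f.toAddMonoidHom where
  antitone _ _ hjk := AddSubgroup.map_mono (hD.antitone hjk)
  mem_zero b := by
    obtain ⟨a, rfl⟩ := hf b
    exact ⟨a, hD.mem_zero a, rfl⟩
  mul_mem := by
    rintro j k - - ⟨a, ha, rfl⟩ ⟨b, hb, rfl⟩
    exact ⟨a * b, hD.mul_mem ha hb, map_mul f a b⟩

end IsDescendingRingFiltration

section SquareZeroUnits

variable {S : Type*} [Ring S] {ξ : S}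

lemma one_add_zsmul_mul_one_add_zsmul (hξ : ξ * ξ = 0) (a b : ℤ) :
    (1 + a • ξ) * (1 + b • ξ) = 1 + (a + b) • ξ := by
  simp only [mul_add, add_mul, one_mul, mul_one, smul_mul_smul_comm, hξ, smul_zero, add_smul]
  abel

def oneAddZSMulHom (hξ : ξ * ξ = 0) : Multiplicative ℤ →* Sˣ where
  toFun e :=
    { val := 1 + e.toAdd • ξ
      inv := 1 + (-e.toAdd) • ξ
      val_inv := by rw [one_add_zsmul_mul_one_add_zsmul hξ, add_neg_cancel, zero_smul, add_zero]
      inv_val := by rw [one_add_zsmul_mul_one_add_zsmul hξ, neg_add_cancel, zero_smul, add_zero] }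
  map_one' := Units.ext (by simp)
  map_mul' a b := Units.ext (one_add_zsmul_mul_one_add_zsmul hξ a.toAdd b.toAdd).symm

lemma coe_oneAddZSMulHom (hξ : ξ * ξ = 0) (e : Multiplicative ℤ) :
    (oneAddZSMulHom hξ e : S) = 1 + e.toAdd • ξ := rfl

end SquareZeroUnits

lemma MonoidAlgebra.exists_mul_eq_of_coeff_mul_ne_zero {R M : Type*} [Semiring R] [Mul M]
    {a b : MonoidAlgebra R M} {w : M} (h : (a * b).coeff w ≠ 0) :
    ∃ u v, a.coeff u ≠ 0 ∧ b.coeff v ≠ 0 ∧ u * v = w := by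
  classical
  obtain ⟨u, hu, v, hv, huv⟩ :=
    Finset.mem_mul.1 (support_coeff_mul_subset a b (Finsupp.mem_support_iff.2 h))
  exact ⟨u, v, Finsupp.mem_support_iff.1 hu, Finsupp.mem_support_iff.1 hv, huv⟩

lemma MonoidAlgebra.coeff_one_of_ne_one {R M : Type*} [Semiring R] [One M] {w : M} (hw : w ≠ 1) :
    (1 : MonoidAlgebra R M).coeff w = 0 := by
  rw [one_def, coeff_single, Finsupp.single_eq_of_ne hw]

namespace Magnus

variable {R : Type*} [Ring R] {α : Type*}

def StutterFree (w : FreeMonoid α) : Prop := w.toList.IsChain (· ≠ ·)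

def syllableWord (S : List (α × ℤ)) : FreeMonoid α := FreeMonoid.ofList (S.map Prod.fst)

lemma syllableWord_cons (p : α × ℤ) (S : List (α × ℤ)) :
    syllableWord (p :: S) = FreeMonoid.of p.1 * syllableWord S := rfl

lemma length_syllableWord (S : List (α × ℤ)) : (syllableWord S).length = S.length := by
  simp [syllableWord, FreeMonoid.length]

def syllableProd (S : List (α × ℤ)) : FreeGroup α :=
  (S.map fun p => FreeGroup.of p.1 ^ p.2).prod

def IsReducedSyllables (S : List (α × ℤ)) : Prop :=
  StutterFree (syllableWord S) ∧ ∀ p ∈ S, p.2 ≠ 0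

lemma syllableProd_cons (p : α × ℤ) (S : List (α × ℤ)) :
    syllableProd (p :: S) = FreeGroup.of p.1 ^ p.2 * syllableProd S := rfl

lemma IsReducedSyllables.exists_zpow_mul {S : List (α × ℤ)} (hS : IsReducedSyllables S) (x : α)
    {δ : ℤ} (hδ : δ ≠ 0) :
    ∃ T, IsReducedSyllables T ∧ syllableProd T = FreeGroup.of x ^ δ * syllableProd S := by
  obtain ⟨hchain, hne⟩ := hS
  rcases S with _ | ⟨⟨y, e⟩, S⟩
  · exact ⟨[(x, δ)], ⟨List.isChain_singleton _, by simpa⟩, by simp [syllableProd]⟩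
  by_cases hxy : x = y
  · subst hxy
    by_cases he : δ + e = 0
    · refine ⟨S, ⟨hchain.tail, (List.forall_mem_cons.1 hne).2⟩, ?_⟩
      rw [syllableProd_cons, ← mul_assoc, ← zpow_add, he, zpow_zero, one_mul]
    · refine ⟨(x, δ + e) :: S,
        ⟨hchain, List.forall_mem_cons.2 ⟨he, (List.forall_mem_cons.1 hne).2⟩⟩, ?_⟩
      rw [syllableProd_cons, syllableProd_cons, ← mul_assoc, ← zpow_add]
  · refine ⟨(x, δ) :: (y, e) :: S, ⟨List.isChain_cons_cons.2 ⟨hxy, hchain⟩,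
      List.forall_mem_cons.2 ⟨hδ, hne⟩⟩, rfl⟩

theorem exists_isReducedSyllables (g : FreeGroup α) :
    ∃ S, IsReducedSyllables S ∧ syllableProd S = g := by
  have hg : g ∈ Subgroup.closure (Set.range FreeGroup.of) := by
    rw [FreeGroup.closure_range_of]; trivial
  induction hg using Subgroup.closure_induction_left with
  | one => exact ⟨[], ⟨List.isChain_nil, by simp⟩, rfl⟩
  | mul_left _ hx _ _ ih =>
    obtain ⟨x, rfl⟩ := hx
    obtain ⟨S, hS, rfl⟩ := ih
    simpa using hS.exists_zpow_mul x one_ne_zero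
  | inv_mul_cancel _ hx _ _ ih =>
    obtain ⟨x, rfl⟩ := hx
    obtain ⟨S, hS, rfl⟩ := ih
    simpa using hS.exists_zpow_mul x (δ := -1) (by decide)

variable (R α) in
def lengthFiltration (k : ℕ) : AddSubgroup (MonoidAlgebra R (FreeMonoid α)) where
  carrier := {a | ∀ w : FreeMonoid α, w.length < k → a.coeff w = 0}
  add_mem' ha hb w hw := by simp [ha w hw, hb w hw]
  zero_mem' _ _ := rfl
  neg_mem' ha w hw := by simp [ha w hw]

lemma isDescendingRingFiltration_lengthFiltration :
    IsDescendingRingFiltration (lengthFiltration R α) where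
  antitone _ _ hjk _ ha w hw := ha w (hw.trans_le hjk)
  mem_zero _ _ hw := absurd hw (Nat.not_lt_zero _)
  mul_mem {j k a b} ha hb w hw := by
    by_contra h
    obtain ⟨u, v, hu, hv, rfl⟩ := exists_mul_eq_of_coeff_mul_ne_zero h
    rw [FreeMonoid.length_mul] at hw
    by_cases hj : u.length < j
    · exact hu (ha u hj)
    · exact hv (hb v (by omega))

variable (R α) in
def stutterIdeal : TwoSidedIdeal (MonoidAlgebra R (FreeMonoid α)) :=
  .mk' {a | ∀ w : FreeMonoid α, StutterFree w → a.coeff w = 0} (fun _ _ => rfl)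
    (fun ha hb w hw => by simp [ha w hw, hb w hw]) (fun ha w hw => by simp [ha w hw])
    (fun hb w hw => by
      by_contra h
      obtain ⟨u, v, -, hv, rfl⟩ := exists_mul_eq_of_coeff_mul_ne_zero h
      exact hv (hb v (List.IsChain.right_of_append hw)))
    (fun ha w hw => by
      by_contra h
      obtain ⟨u, v, hu, -, rfl⟩ := exists_mul_eq_of_coeff_mul_ne_zero h
      exact hu (ha u (List.IsChain.left_of_append hw)))

lemma mem_stutterIdeal {a : MonoidAlgebra R (FreeMonoid α)} :
    a ∈ stutterIdeal R α ↔ ∀ w : FreeMonoid α, StutterFree w → a.coeff w = 0 :=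
  TwoSidedIdeal.mem_mk' ..

variable (R α) in
abbrev MagnusRing := (stutterIdeal R α).ringCon.Quotient

variable (R α) in
def mk : MonoidAlgebra R (FreeMonoid α) →+* MagnusRing R α := (stutterIdeal R α).ringCon.mk'

variable (R α) in
def magnusFiltration (k : ℕ) : AddSubgroup (MagnusRing R α) :=
  (lengthFiltration R α k).map (mk R α).toAddMonoidHom

variable (R α) in
lemma isDescendingRingFiltration_magnusFiltration :
    IsDescendingRingFiltration (magnusFiltration R α) :=
  isDescendingRingFiltration_lengthFiltration.map _ (RingCon.mk'_surjective _)

lemma coeff_eq_zero_of_mk_mem_magnusFiltration {a : MonoidAlgebra R (FreeMonoid α)} {k : ℕ}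
    (ha : mk R α a ∈ magnusFiltration R α k) {w : FreeMonoid α} (hw : StutterFree w)
    (hlen : w.length < k) : a.coeff w = 0 := by
  obtain ⟨b, hb, hba⟩ := ha
  have hsub : b - a ∈ stutterIdeal R α := (TwoSidedIdeal.rel_iff _ _ _).1 ((RingCon.eq _).1 hba)
  have := mem_stutterIdeal.1 hsub w hw
  rwa [coeff_sub, Finsupp.sub_apply, hb w hlen, zero_sub, neg_eq_zero] at this

variable (R) in
def X (x : α) : MagnusRing R α := mk R α (single (FreeMonoid.of x) 1)

lemma X_mul_X_self (x : α) : X R x * X R x = 0 := by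
  have hmem : single (FreeMonoid.of x * FreeMonoid.of x) (1 : R) ∈ stutterIdeal R α := by
    refine mem_stutterIdeal.2 fun w hw => ?_
    rw [coeff_single, Finsupp.single_eq_of_ne']
    rintro rfl
    simp [StutterFree] at hw
  rw [X, ← map_mul, single_mul_single, mul_one, ← map_zero (mk R α)]
  exact (RingCon.eq _).2 ((TwoSidedIdeal.mem_iff _ _).1 hmem)

variable (R α) in
def magnus : FreeGroup α →* (MagnusRing R α)ˣ :=
  FreeGroup.lift fun x => oneAddZSMulHom (X_mul_X_self (R := R) x) (.ofAdd 1)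

lemma coe_magnus_of_zpow (x : α) (e : ℤ) :
    (magnus R α (FreeGroup.of x ^ e) : MagnusRing R α) =
      mk R α (1 + single (FreeMonoid.of x) (e : R)) := by
  rw [magnus, map_zpow, FreeGroup.lift_apply_of, ← map_zpow, ← ofAdd_zsmul, smul_eq_mul, mul_one,
    coe_oneAddZSMulHom, toAdd_ofAdd, map_add, map_one, X, ← map_zsmul, smul_single,
    Int.smul_one_eq_cast]

lemma magnus_mem_unitsSubgroup_one (g : FreeGroup α) :
    magnus R α g ∈ (isDescendingRingFiltration_magnusFiltration R α).unitsSubgroup 1 := by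
  induction g using FreeGroup.induction_on with
  | C1 => exact one_mem _
  | of x =>
    rw [IsDescendingRingFiltration.mem_unitsSubgroup, ← zpow_one (FreeGroup.of x),
      coe_magnus_of_zpow, Int.cast_one, map_add, map_one, add_sub_cancel_left]
    refine ⟨_, fun w hw => ?_, rfl⟩
    rw [Nat.lt_one_iff, FreeMonoid.length_eq_zero] at hw
    rw [hw, coeff_single, Finsupp.single_eq_of_ne' (FreeMonoid.of_ne_one x)]
  | inv_of x hx => rw [map_inv]; exact inv_mem hx
  | mul g h hg hh => rw [map_mul]; exact mul_mem hg hh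

variable (R) in
def magnusPoly (S : List (α × ℤ)) : MonoidAlgebra R (FreeMonoid α) :=
  (S.map fun p => 1 + single (FreeMonoid.of p.1) (p.2 : R)).prod

lemma magnusPoly_cons (p : α × ℤ) (S : List (α × ℤ)) :
    magnusPoly R (p :: S) = (1 + single (FreeMonoid.of p.1) (p.2 : R)) * magnusPoly R S := rfl

lemma coe_magnus_syllableProd (S : List (α × ℤ)) :
    (magnus R α (syllableProd S) : MagnusRing R α) = mk R α (magnusPoly R S) := by
  induction S with
  | nil => simp [syllableProd, magnusPoly]
  | cons p S ih =>
    rw [syllableProd_cons, map_mul, Units.val_mul, ih, coe_magnus_of_zpow, magnusPoly_cons,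
      map_mul]

lemma coeff_one_add_single_mul_of_mul [DecidableEq α] (x y : α) (r : R)
    (b : MonoidAlgebra R (FreeMonoid α)) (v : FreeMonoid α) :
    ((1 + single (FreeMonoid.of x) r) * b).coeff (FreeMonoid.of y * v) =
      b.coeff (FreeMonoid.of y * v) + if x = y then r * b.coeff v else 0 := by
  rw [add_mul, one_mul, coeff_add, Finsupp.add_apply]
  congr 1
  split_ifs with hxy
  · subst hxy
    exact coeff_single_mul_eq_mul_coeff _ fun _ _ => mul_right_inj _
  · refine coeff_single_mul_of_forall_mul_ne _ _ fun d hd => hxy ?_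
    exact (List.cons_eq_cons.1 (congrArg FreeMonoid.toList hd)).1

lemma coeff_magnusPoly_of_length_lt {S : List (α × ℤ)} {w : FreeMonoid α}
    (hw : S.length < w.length) : (magnusPoly R S).coeff w = 0 := by
  induction S generalizing w with
  | nil =>
    refine coeff_one_of_ne_one ?_
    rintro rfl
    simp at hw
  | cons p S ih =>
    classical
    cases w using FreeMonoid.casesOn with
    | one => simp at hw
    | of_mul y v =>
      simp only [List.length_cons, FreeMonoid.length_mul, FreeMonoid.length_of] at hw
      rw [magnusPoly_cons, coeff_one_add_single_mul_of_mul, ih (w := FreeMonoid.of y * v)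
        (by simp; omega), ih (w := v) (by omega)]
      simp

lemma coeff_magnusPoly_syllableWord (S : List (α × ℤ)) :
    (magnusPoly R S).coeff (syllableWord S) = (S.map fun p => (p.2 : R)).prod := by
  induction S with
  | nil => exact coeff_one_one
  | cons p S ih =>
    classical
    rw [magnusPoly_cons, syllableWord_cons, coeff_one_add_single_mul_of_mul, if_pos rfl, ih,
      coeff_magnusPoly_of_length_lt (by simp [length_syllableWord]), zero_add, List.map_cons,
      List.prod_cons]

theorem syllableProd_notMem_lowerCentralSeries {S : List (α × ℤ)} (hS : IsReducedSyllables S)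
    (hne : S ≠ []) :
    syllableProd S ∉ (⊤ : Subgroup (FreeGroup α)).lowerCentralSeries S.length := by
  intro hmem
  have hμ := (isDescendingRingFiltration_magnusFiltration ℤ α).lowerCentralSeries_le_comap
    (magnus ℤ α) magnus_mem_unitsSubgroup_one S.length hmem
  rw [Subgroup.mem_comap, IsDescendingRingFiltration.mem_unitsSubgroup, coe_magnus_syllableProd,
    ← map_one (mk ℤ α), ← map_sub] at hμ
  have hcoeff := coeff_eq_zero_of_mk_mem_magnusFiltration hμ hS.1
    (by simp [length_syllableWord])
  have hword : syllableWord S ≠ 1 := fun h => hne <| by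
    simpa [h] using (length_syllableWord S).symm
  rw [coeff_sub, Finsupp.sub_apply, coeff_magnusPoly_syllableWord, coeff_one_of_ne_one hword,
    sub_zero] at hcoeff
  obtain ⟨p, hp, hp0⟩ := List.mem_map.1 (List.prod_eq_zero_iff.1 hcoeff)
  exact hS.2 p hp (by simpa using hp0)

end Magnus

end

open Magnus in
/-- The lower central series of a free group has trivial intersection. -/
theorem iInf_lowerCentralSeries_freeGroup (α : Type*) :
    ⨅ n : ℕ, (⊤ : Subgroup (FreeGroup α)).lowerCentralSeries n = ⊥ := by
  refine eq_bot_iff.2 fun g hg => Subgroup.mem_bot.2 ?_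
  obtain ⟨S, hS, rfl⟩ := exists_isReducedSyllables g
  by_contra hne
  have hSne : S ≠ [] := by
    rintro rfl
    exact hne rfl
  exact syllableProd_notMem_lowerCentralSeries hS hSne (Subgroup.mem_iInf.1 hg S.length)
end

section
/- Let F be the free group on two generators a, b. Then the commutator subgroup F₂ = [F,F] is freely generated by the commutators [aⁿ, bᵐ], where n and m range over all nonzero integers. -/
/-!
The cosets of `[F, F]` are indexed by `ℤ²` through the transversal `aᵖ bᵠ`. Let `F` act on
`ℤ² × F(I)`, where `F(I)` is free on the index set `I` of the claimed basis and
`φ : F(I) → F` sends its generators to the commutators: `a` moves `p`, while `b` moves `q` and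
multiplies the word by the Schreier generator `[aᵖ, bᵠ⁺¹]⁻¹ [aᵖ, bᵠ]`. Then
`(p, q, w) ↦ aᵖ bᵠ φ(w)` is equivariant, so following `g` from `(0, 0, 1)` writes `g` as
`aᵖ bᵠ φ(w)`, and `p = q = 0` when `g ∈ [F, F]` by comparing exponent sums. Conversely `φ(y)`
moves `(0, 0, w)` to `(0, 0, y w)`, so `φ` is injective.
-/

open Function Equiv

theorem Equiv.Perm.zpow_apply_eq_of_apply_eq_add_one {α : Type*} (σ : Perm α) (f : ℤ → α)
    (h : ∀ k, σ (f k) = f (k + 1)) (n k : ℤ) : (σ ^ n) (f k) = f (k + n) := by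
  induction n using Int.induction_on generalizing k with
  | zero => simp
  | succ n ih => rw [zpow_add_one, Perm.mul_apply, h, ih, add_right_comm, add_assoc]
  | pred n ih =>
    have h' : σ⁻¹ (f k) = f (k - 1) := by rw [Perm.inv_eq_iff_eq, h, sub_add_cancel]
    rw [zpow_sub_one, Perm.mul_apply, h', ih]
    ring_nf

theorem Function.Semiconj.of_closure_eq_top {G X Y : Type*} [Group G] (σ : G →* Perm X)
    (π : G →* Perm Y) (f : X → Y) {s : Set G} (hs : Subgroup.closure s = ⊤)
    (h : ∀ g ∈ s, Semiconj f (σ g) (π g)) (g : G) : Semiconj f (σ g) (π g) := by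
  have hg : g ∈ Subgroup.closure s := hs ▸ Subgroup.mem_top g
  induction hg using Subgroup.closure_induction with
  | mem g hg => exact h g hg
  | one => simpa using Semiconj.id_right
  | mul g g' _ _ hg hg' => simpa using hg.comp_right hg'
  | inv g _ hg =>
    simpa using hg.inverses_right (σ g).right_inv (π g).left_inv

namespace CommutatorBasis

local notation "𝐚" => FreeGroup.of false
local notation "𝐛" => FreeGroup.of true

abbrev Index : Type := {p : ℤ × ℤ // p.1 ≠ 0 ∧ p.2 ≠ 0}

def commutatorMap : FreeGroup Index →* FreeGroup Bool :=
  FreeGroup.lift fun p => (𝐚 ^ p.1.1)⁻¹ * (𝐛 ^ p.1.2)⁻¹ * 𝐚 ^ p.1.1 * 𝐛 ^ p.1.2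

theorem commutatorMap_of (p : Index) :
    commutatorMap (.of p) = (𝐚 ^ p.1.1)⁻¹ * (𝐛 ^ p.1.2)⁻¹ * 𝐚 ^ p.1.1 * 𝐛 ^ p.1.2 :=
  FreeGroup.lift_apply_of

open scoped commutatorElement in
theorem range_commutatorMap_le : commutatorMap.range ≤ commutator (FreeGroup Bool) := by
  refine FreeGroup.range_lift_le (Set.range_subset_iff.2 fun p => ?_)
  rw [SetLike.mem_coe, commutator_def]
  simpa only [commutatorElement_def, inv_inv] using Subgroup.commutator_mem_commutator
    (Subgroup.mem_top (𝐚 ^ p.1.1)⁻¹) (Subgroup.mem_top (𝐛 ^ p.1.2)⁻¹)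

-- Extended by `1` so that `commutatorMap (gen n m) = [aⁿ, bᵐ]` holds for all `n`, `m`.
def gen (n m : ℤ) : FreeGroup Index :=
  if h : n ≠ 0 ∧ m ≠ 0 then .of ⟨(n, m), h⟩ else 1

@[simp] theorem gen_zero_left (m : ℤ) : gen 0 m = 1 := by simp [gen]
@[simp] theorem gen_zero_right (n : ℤ) : gen n 0 = 1 := by simp [gen]

theorem gen_eq_of (p : Index) : gen p.1.1 p.1.2 = .of p := dif_pos p.2

theorem commutatorMap_gen (n m : ℤ) :
    commutatorMap (gen n m) = (𝐚 ^ n)⁻¹ * (𝐛 ^ m)⁻¹ * 𝐚 ^ n * 𝐛 ^ m := by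
  unfold gen
  split_ifs with h
  · exact commutatorMap_of _
  · rcases not_and_or.1 h with hn | hm <;> simp_all

abbrev State : Type := ℤ × ℤ × FreeGroup Index

def stepA : Perm State where
  toFun x := (x.1 + 1, x.2)
  invFun x := (x.1 - 1, x.2)
  left_inv x := by simp
  right_inv x := by simp

-- Since `b aᵖ bᵠ = aᵖ bᵠ⁺¹ [aᵖ, bᵠ⁺¹]⁻¹ [aᵖ, bᵠ]`, this is left multiplication by `b` in `value`.
def stepB : Perm State where
  toFun x := (x.1, x.2.1 + 1, (gen x.1 (x.2.1 + 1))⁻¹ * gen x.1 x.2.1 * x.2.2)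
  invFun x := (x.1, x.2.1 - 1, (gen x.1 (x.2.1 - 1))⁻¹ * gen x.1 x.2.1 * x.2.2)
  left_inv x := by simp [mul_assoc]
  right_inv x := by simp [mul_assoc]

def action : FreeGroup Bool →* Perm State :=
  FreeGroup.lift fun i => bif i then stepB else stepA

theorem action_a_zpow (k p q : ℤ) (w : FreeGroup Index) :
    action (𝐚 ^ k) (p, q, w) = (p + k, q, w) := by
  rw [map_zpow, action, FreeGroup.lift_apply_of]
  exact Perm.zpow_apply_eq_of_apply_eq_add_one stepA (fun p => (p, q, w)) (fun _ => rfl) k p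

theorem action_b_zpow (k p q : ℤ) (w : FreeGroup Index) :
    action (𝐛 ^ k) (p, q, w) = (p, q + k, (gen p (q + k))⁻¹ * gen p q * w) := by
  rw [map_zpow, action, FreeGroup.lift_apply_of]
  have := Perm.zpow_apply_eq_of_apply_eq_add_one stepB
    (fun q' => (p, q', (gen p q')⁻¹ * (gen p q * w))) (fun _ => by simp [stepB, mul_assoc]) k q
  simpa [mul_assoc] using this

def value (x : State) : FreeGroup Bool := 𝐚 ^ x.1 * 𝐛 ^ x.2.1 * commutatorMap x.2.2

theorem value_action (g : FreeGroup Bool) (x : State) : value (action g x) = g * value x := by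
  refine Semiconj.of_closure_eq_top action (MulAction.toPermHom _ _) value
    (FreeGroup.closure_range_of Bool) ?_ g x
  rintro _ ⟨i, rfl⟩ ⟨p, q, w⟩
  cases i with
  | false =>
    show 𝐚 ^ (p + 1) * 𝐛 ^ q * commutatorMap w = 𝐚 * (𝐚 ^ p * 𝐛 ^ q * commutatorMap w)
    group
  | true =>
    show 𝐚 ^ p * 𝐛 ^ (q + 1) * commutatorMap ((gen p (q + 1))⁻¹ * gen p q * w) =
      𝐛 * (𝐚 ^ p * 𝐛 ^ q * commutatorMap w)
    simp only [map_mul, map_inv, commutatorMap_gen]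
    group

theorem action_commutatorMap (y w : FreeGroup Index) :
    action (commutatorMap y) (0, 0, w) = (0, 0, y * w) := by
  refine (Semiconj.of_closure_eq_top (MulAction.toPermHom _ _) (action.comp commutatorMap)
    (fun w => (0, 0, w)) (FreeGroup.closure_range_of Index) ?_ y w).symm
  rintro _ ⟨⟨⟨n, m⟩, hn, hm⟩, rfl⟩ w
  have hgen : gen n m = .of ⟨(n, m), hn, hm⟩ := gen_eq_of ⟨(n, m), hn, hm⟩
  simp only [MulAction.toPermHom_apply, MulAction.toPerm_apply, smul_eq_mul,
    MonoidHom.comp_apply, commutatorMap_of, map_mul, Perm.mul_apply, ← zpow_neg,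
    action_a_zpow, action_b_zpow]
  simp [hgen]

theorem commutatorMap_injective : Injective commutatorMap := by
  intro y z h
  simpa [action_commutatorMap] using congrArg (fun g => (action g (0, 0, 1)).2.2) h

def exponentSums : FreeGroup Bool →* Multiplicative (ℤ × ℤ) :=
  FreeGroup.lift fun i => .ofAdd (bif i then (0, 1) else (1, 0))

theorem exponentSums_value (x : State) : exponentSums (value x) = .ofAdd (x.1, x.2.1) := by
  have hcomm : exponentSums (commutatorMap x.2.2) = 1 :=
    Abelianization.commutator_subset_ker exponentSums (range_commutatorMap_le ⟨x.2.2, rfl⟩)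
  rw [value, map_mul, hcomm, mul_one]
  simp [exponentSums, ← ofAdd_zsmul, ← ofAdd_add]

theorem commutator_le_range_commutatorMap :
    commutator (FreeGroup Bool) ≤ commutatorMap.range := by
  intro g hg
  have hvalue : value (action g (0, 0, 1)) = g := by
    rw [value_action]
    simp [value]
  generalize action g (0, 0, 1) = x at hvalue
  obtain ⟨p, q, w⟩ := x
  have hexp : Multiplicative.ofAdd (p, q) = 1 := by
    rw [← exponentSums_value (p, q, w), hvalue]
    exact Abelianization.commutator_subset_ker exponentSums hg
  obtain ⟨rfl, rfl⟩ : p = 0 ∧ q = 0 := by simpa using hexp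
  exact ⟨w, by simpa [value] using hvalue⟩

theorem range_commutatorMap : commutatorMap.range = commutator (FreeGroup Bool) :=
  le_antisymm range_commutatorMap_le commutator_le_range_commutatorMap

end CommutatorBasis

/-- In the free group `F` on two generators `a`, `b`, the commutator subgroup `[F,F]`
is freely generated by the commutators `[aⁿ, bᵐ] = a⁻ⁿ b⁻ᵐ aⁿ bᵐ` for nonzero
integers `n`, `m`. -/
theorem commutator_freeGroup_free_basis :
    ∃ B : FreeGroupBasis {p : ℤ × ℤ // p.1 ≠ 0 ∧ p.2 ≠ 0}
      (commutator (FreeGroup Bool)),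
      ∀ p : {p : ℤ × ℤ // p.1 ≠ 0 ∧ p.2 ≠ 0},
        ((B p : commutator (FreeGroup Bool)) : FreeGroup Bool) =
          (FreeGroup.of false ^ p.1.1)⁻¹ * (FreeGroup.of true ^ p.1.2)⁻¹ *
            FreeGroup.of false ^ p.1.1 * FreeGroup.of true ^ p.1.2 := by
  let e := (MonoidHom.ofInjective CommutatorBasis.commutatorMap_injective).trans
    (MulEquiv.subgroupCongr CommutatorBasis.range_commutatorMap)
  exact ⟨.ofRepr e.symm, CommutatorBasis.commutatorMap_of⟩
end

section
/- In any group G, if b²a = ab² for elements a, b ∈ G, then for every natural number n, [a,b]^(2n) = [[a,b]^(-n), b]. -/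
/-!
Write `c = [a, b]`. The relation `b²a = ab²` says exactly that conjugation by `b` inverts `c`,
hence every power of `c`; so `[c⁻ⁿ, b] = cⁿ · (b⁻¹c⁻ⁿb) = cⁿ · cⁿ`.
-/

section

variable {G : Type*} [Group G]

theorem conj_commutator_eq_inv_of_sq_commute {a b : G} (h : b ^ 2 * a = a * b ^ 2) :
    b⁻¹ * (a⁻¹ * b⁻¹ * a * b) * b = (a⁻¹ * b⁻¹ * a * b)⁻¹ :=
  calc b⁻¹ * (a⁻¹ * b⁻¹ * a * b) * b = b⁻¹ * a⁻¹ * b⁻¹ * (a * b ^ 2) := by rw [pow_two]; group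
    _ = b⁻¹ * a⁻¹ * b⁻¹ * (b ^ 2 * a) := by rw [h]
    _ = (a⁻¹ * b⁻¹ * a * b)⁻¹ := by group

theorem conj_zpow_eq_zpow_neg_of_conj_eq_inv {b c : G} (h : b⁻¹ * c * b = c⁻¹) (m : ℤ) :
    b⁻¹ * c ^ m * b = c ^ (-m) := by
  simpa [h, zpow_neg] using (conj_zpow (a := b⁻¹) (b := c) (i := m)).symm

theorem commutator_zpow_eq_zpow_of_conj_eq_inv {b c : G} (h : b⁻¹ * c * b = c⁻¹) (m : ℤ) :
    (c ^ m)⁻¹ * b⁻¹ * c ^ m * b = c ^ (-2 * m) :=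
  calc (c ^ m)⁻¹ * b⁻¹ * c ^ m * b = c ^ (-m) * (b⁻¹ * c ^ m * b) := by
        rw [zpow_neg]; group
    _ = c ^ (-2 * m) := by
        rw [conj_zpow_eq_zpow_neg_of_conj_eq_inv h, ← zpow_add]; ring_nf

end

/-- If `b²a = ab²`, then `[a,b]^(2n) = [[a,b]⁻ⁿ, b]`, where `[x,y] = x⁻¹y⁻¹xy`. -/
theorem comm_pow_even {G : Type*} [Group G] (a b : G) (h : b ^ 2 * a = a * b ^ 2)
    (n : ℕ) :
    (a⁻¹ * b⁻¹ * a * b) ^ (2 * n) =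
      ((a⁻¹ * b⁻¹ * a * b) ^ (-(n : ℤ)))⁻¹ * b⁻¹ *
        (a⁻¹ * b⁻¹ * a * b) ^ (-(n : ℤ)) * b := by
  rw [commutator_zpow_eq_zpow_of_conj_eq_inv (conj_commutator_eq_inv_of_sq_commute h),
    ← zpow_natCast]
  push_cast
  ring_nf
end

section
/- Let A * B be the free product of groups A and B, let b ∈ B have order > 2, and let w_b: A*B → ℤ be defined by w_b(x) = (x,b) - (x,b⁻¹), counting occurrences of b and b⁻¹ in the reduced form of x. Then for any x ∈ A*B that is a product of k commutators [xᵢ,yᵢ] with xᵢ, yᵢ ∈ A*B, one has |w_b(x)| ≤ 12k - 3. -/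
/-!
`w_b` is an odd quasimorphism of defect `3`. The reduced form of `x * y` arises from those of
`x` and `y` by cancelling mutually inverse letters at the junction, which contribute opposite
amounts to the balance, and then possibly merging one last pair of letters `u`, `v` of the same
factor into `u * v`, which changes the balance by at most `3`. Inverting a reduced word reverses
it and inverts its letters, so `w_b (x⁻¹) = -w_b x`.

For an odd quasimorphism of defect `D`, a commutator `x⁻¹ y⁻¹ x y` has value at most `3 * D`,
since the values of `x⁻¹, y⁻¹, x, y` cancel; a product of `k` commutators then has value at most
`3 * D * k + D * (k - 1) = 4 * D * k - D`.
-/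

open Monoid

/-- The Rhemtulla function `w_b` on a free product: `w_b(x)` is the number of
occurrences of the letter `b` in the reduced form of `x` minus the number of
occurrences of `b⁻¹`. -/
noncomputable def rhemtulla {G : Bool → Type*} [∀ i, Group (G i)]
    [∀ i, DecidableEq (G i)] (b : G true) (x : CoprodI G) : ℤ :=
  ((CoprodI.Word.equiv x).toList.count ⟨true, b⟩ : ℤ) -
    ((CoprodI.Word.equiv x).toList.count ⟨true, b⁻¹⟩ : ℤ)

namespace Monoid.CoprodI.Word

section Monoid

variable {ι : Type*} {M : ι → Type*} [∀ i, Monoid (M i)]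

theorem exists_toList_eq_of_toList_eq_append {w : Word M} {L₁ L₂ : List (Σ i, M i)}
    (h : w.toList = L₁ ++ L₂) : ∃ w₁ w₂ : Word M, w₁.toList = L₁ ∧ w₂.toList = L₂ := by
  have hne := w.ne_one
  have hchain := w.chain_ne
  rw [h] at hne hchain
  exact ⟨⟨L₁, fun l hl => hne l (List.mem_append_left _ hl), (List.isChain_append.mp hchain).1⟩,
    ⟨L₂, fun l hl => hne l (List.mem_append_right _ hl), (List.isChain_append.mp hchain).2.1⟩,
    rfl, rfl⟩

theorem exists_toList_eq_append_singleton {w : Word M} {l : Σ i, M i}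
    (h : l ∈ w.toList.getLast?) : ∃ w' : Word M, w.toList = w'.toList ++ [l] := by
  have hw := (List.dropLast_append_getLast? l h).symm
  obtain ⟨w', -, hw', -⟩ := exists_toList_eq_of_toList_eq_append hw
  exact ⟨w', hw' ▸ hw⟩

theorem exists_toList_eq_cons {w : Word M} {l : Σ i, M i}
    (h : l ∈ w.toList.head?) : ∃ w' : Word M, w.toList = l :: w'.toList := by
  obtain ⟨L, hL⟩ := List.head?_eq_some_iff.mp h
  obtain ⟨-, w', -, hw'⟩ := exists_toList_eq_of_toList_eq_append (L₁ := [l]) hL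
  exact ⟨w', hw' ▸ hL⟩

theorem prod_mul_prod_of_mul_eq_one {w₁ w₁' w₂ w₂' : Word M} {i : ι} {u v : M i}
    (hw₁ : w₁.toList = w₁'.toList ++ [⟨i, u⟩])
    (hw₂ : w₂.toList = ⟨i, v⟩ :: w₂'.toList) (huv : u * v = 1) :
    w₁.prod * w₂.prod = w₁'.prod * w₂'.prod := by
  simp only [prod, hw₁, hw₂, List.map_append, List.map_cons, List.map_nil, List.prod_append,
    List.prod_cons, List.prod_nil, mul_one, mul_assoc]
  rw [← mul_assoc (of u), ← map_mul, huv, map_one, one_mul]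

variable [DecidableEq ι] [∀ i, DecidableEq (M i)]

theorem equiv_prod (w : Word M) : equiv w.prod = w :=
  equiv.apply_symm_apply w

theorem prod_equiv (x : CoprodI M) : (equiv x).prod = x :=
  equiv.symm_apply_apply x

theorem toList_equiv_prod_mul_prod {w₁ w₂ : Word M}
    (h : ∀ l₁ ∈ w₁.toList.getLast?, ∀ l₂ ∈ w₂.toList.head?, l₁.1 ≠ l₂.1) :
    (equiv (w₁.prod * w₂.prod)).toList = w₁.toList ++ w₂.toList := by
  let w : Word M :=
    { toList := w₁.toList ++ w₂.toList
      ne_one := by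
        simp only [List.mem_append]
        rintro l (hl | hl)
        exacts [w₁.ne_one l hl, w₂.ne_one l hl]
      chain_ne := List.isChain_append.mpr ⟨w₁.chain_ne, w₂.chain_ne, h⟩ }
  have hprod : w.prod = w₁.prod * w₂.prod := by
    simp only [w, prod, List.map_append, List.prod_append]
  rw [← hprod, equiv_prod]

theorem toList_equiv_prod_mul_prod_of_mul_ne_one {w₁ w₁' w₂ w₂' : Word M} {i : ι} {u v : M i}
    (hw₁ : w₁.toList = w₁'.toList ++ [⟨i, u⟩])
    (hw₂ : w₂.toList = ⟨i, v⟩ :: w₂'.toList) (huv : u * v ≠ 1) :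
    (equiv (w₁.prod * w₂.prod)).toList = w₁'.toList ++ ⟨i, u * v⟩ :: w₂'.toList := by
  have hjunction₁ := (List.isChain_append.mp (hw₁ ▸ w₁.chain_ne)).2.2
  have hjunction₂ := (List.isChain_cons.mp (hw₂ ▸ w₂.chain_ne)).1
  have hfst : w₂'.fstIdx ≠ some i := fstIdx_ne_iff.mpr hjunction₂
  have hprod : w₁.prod * w₂.prod = w₁'.prod * (cons (u * v) w₂' hfst huv).prod := by
    rw [prod_cons, map_mul]
    simp only [prod, hw₁, hw₂, List.map_append, List.map_cons, List.map_nil,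
      List.prod_append, List.prod_cons, List.prod_nil, mul_one, mul_assoc]
  rw [hprod, toList_equiv_prod_mul_prod]
  · rfl
  · rintro l₁ hl₁ _ ⟨⟩
    exact hjunction₁ l₁ hl₁ ⟨i, u⟩ rfl

end Monoid

section Group

variable {ι : Type*} {G : ι → Type*} [∀ i, Group (G i)]

def invLetter (l : Σ i, G i) : Σ i, G i := ⟨l.1, l.2⁻¹⟩

theorem invLetter_involutive : Function.Involutive (invLetter (G := G)) := fun l =>
  Sigma.ext rfl (heq_of_eq (inv_inv l.2))

def inv (w : Word G) : Word G where
  toList := (w.toList.map invLetter).reverse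
  ne_one l hl := by
    obtain ⟨l', hl', rfl⟩ := List.mem_map.mp (List.mem_reverse.mp hl)
    exact inv_ne_one.mpr (w.ne_one l' hl')
  chain_ne := List.isChain_reverse.mpr <| (List.isChain_map _).mpr <|
    w.chain_ne.imp fun _ _ h => Ne.symm h

theorem prod_inv (w : Word G) : w.inv.prod = w.prod⁻¹ := by
  simp only [prod, inv, List.prod_inv_reverse, List.map_reverse, List.map_map, Function.comp_def,
    invLetter]
  congr 2

theorem equiv_inv [DecidableEq ι] [∀ i, DecidableEq (G i)] (x : CoprodI G) :
    equiv x⁻¹ = (equiv x).inv := by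
  rw [← equiv_prod (equiv x).inv, prod_inv, prod_equiv]

end Group

end Monoid.CoprodI.Word

open CoprodI

section LetterBalance

variable {ι : Type*} [DecidableEq ι] {G : ι → Type*} [∀ i, Group (G i)]
  [∀ i, DecidableEq (G i)] {i : ι} (b : G i)

def letterBalance (L : List (Σ i, G i)) : ℤ :=
  L.count ⟨i, b⟩ - L.count ⟨i, b⁻¹⟩

theorem letterBalance_append (L₁ L₂ : List (Σ i, G i)) :
    letterBalance b (L₁ ++ L₂) = letterBalance b L₁ + letterBalance b L₂ := by
  simp only [letterBalance, List.count_append]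
  push_cast
  ring

theorem letterBalance_cons (l : Σ i, G i) (L : List (Σ i, G i)) :
    letterBalance b (l :: L) = letterBalance b [l] + letterBalance b L :=
  letterBalance_append b [l] L

theorem abs_letterBalance_singleton_le (l : Σ i, G i) : |letterBalance b [l]| ≤ 1 := by
  have h₁ : [l].count ⟨i, b⟩ ≤ 1 := List.count_le_length.trans_eq List.length_singleton
  have h₂ : [l].count ⟨i, b⁻¹⟩ ≤ 1 := List.count_le_length.trans_eq List.length_singleton
  rw [letterBalance, abs_le]
  omega

theorem letterBalance_reverse_map_invLetter (L : List (Σ i, G i)) :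
    letterBalance b (L.map Word.invLetter).reverse = -letterBalance b L := by
  have hcount (g : G i) : (L.map Word.invLetter).count ⟨i, g⟩ = L.count ⟨i, g⁻¹⟩ := by
    rw [← List.count_map_of_injective L _ Word.invLetter_involutive.injective]
    simp [Word.invLetter]
  simp only [letterBalance, List.count_reverse, hcount, inv_inv]
  ring

theorem letterBalance_singleton_inv {j : ι} (u : G j) :
    letterBalance b [⟨j, u⁻¹⟩] = -letterBalance b [⟨j, u⟩] :=
  letterBalance_reverse_map_invLetter b [⟨j, u⟩]

theorem abs_letterBalance_equiv_mul_sub_le (x y : CoprodI G) :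
    |letterBalance b (Word.equiv (x * y)).toList - letterBalance b (Word.equiv x).toList -
      letterBalance b (Word.equiv y).toList| ≤ 3 := by
  rw [← Word.prod_equiv x, ← Word.prod_equiv y, Word.equiv_prod, Word.equiv_prod]
  generalize Word.equiv x = w₁, Word.equiv y = w₂
  induction hn : w₁.toList.length using Nat.strong_induction_on generalizing w₁ w₂ with
  | _ n ih =>
    by_cases hsep : ∀ l₁ ∈ w₁.toList.getLast?, ∀ l₂ ∈ w₂.toList.head?, l₁.1 ≠ l₂.1
    · simp [Word.toList_equiv_prod_mul_prod hsep, letterBalance_append]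
    push Not at hsep
    obtain ⟨⟨j, u⟩, hu, ⟨j', v⟩, hv, rfl : j = j'⟩ := hsep
    obtain ⟨w₁', hw₁⟩ := Word.exists_toList_eq_append_singleton hu
    obtain ⟨w₂', hw₂⟩ := Word.exists_toList_eq_cons hv
    rw [hw₁, hw₂, letterBalance_append, letterBalance_cons b ⟨j, v⟩]
    by_cases huv : u * v = 1
    · have hcancel : letterBalance b [⟨j, u⟩] + letterBalance b [⟨j, v⟩] = 0 := by
        rw [eq_inv_of_mul_eq_one_right huv, letterBalance_singleton_inv, add_neg_cancel]
      have hlen : w₁'.toList.length < n := by simp [← hn, hw₁]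
      convert ih _ hlen w₁' w₂' rfl using 2
      rw [Word.prod_mul_prod_of_mul_eq_one hw₁ hw₂ huv]
      linarith
    · rw [Word.toList_equiv_prod_mul_prod_of_mul_ne_one hw₁ hw₂ huv, letterBalance_append,
        letterBalance_cons b ⟨j, u * v⟩]
      have h₁ := abs_le.mp (abs_letterBalance_singleton_le b ⟨j, u * v⟩)
      have h₂ := abs_le.mp (abs_letterBalance_singleton_le b ⟨j, u⟩)
      have h₃ := abs_le.mp (abs_letterBalance_singleton_le b ⟨j, v⟩)
      rw [abs_le]
      constructor <;> linarith [h₁.1, h₁.2, h₂.1, h₂.2, h₃.1, h₃.2]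

theorem letterBalance_equiv_inv (x : CoprodI G) :
    letterBalance b (Word.equiv x⁻¹).toList = -letterBalance b (Word.equiv x).toList := by
  rw [Word.equiv_inv]
  exact letterBalance_reverse_map_invLetter b _

end LetterBalance

section Quasimorphism

variable {H R : Type*} [Group H] [CommRing R] [LinearOrder R] [IsStrictOrderedRing R]
  {f : H → R} {D : R}

theorem abs_apply_commutator_le (hf : ∀ x y, |f (x * y) - f x - f y| ≤ D)
    (hinv : ∀ x, f x⁻¹ = -f x) (x y : H) : |f (x⁻¹ * y⁻¹ * x * y)| ≤ 3 * D := by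
  have h₁ := abs_le.mp (hf (x⁻¹ * y⁻¹ * x) y)
  have h₂ := abs_le.mp (hf (x⁻¹ * y⁻¹) x)
  have h₃ := abs_le.mp (hf x⁻¹ y⁻¹)
  rw [hinv, hinv] at h₃
  rw [abs_le]
  constructor <;> linarith [h₁.1, h₁.2, h₂.1, h₂.2, h₃.1, h₃.2]

theorem abs_apply_prod_commutators_le (hf : ∀ x y, |f (x * y) - f x - f y| ≤ D)
    (hinv : ∀ x, f x⁻¹ = -f x) (p : H × H) (l : List (H × H)) :
    |f ((p :: l).map fun q => q.1⁻¹ * q.2⁻¹ * q.1 * q.2).prod| ≤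
      4 * D * (p :: l).length - D := by
  induction l generalizing p with
  | nil => simpa using (abs_apply_commutator_le hf hinv p.1 p.2).trans_eq (by ring)
  | cons q l ih =>
    have hcomm := abs_le.mp (abs_apply_commutator_le hf hinv p.1 p.2)
    have htail := abs_le.mp (ih q)
    have hmul := abs_le.mp (hf (p.1⁻¹ * p.2⁻¹ * p.1 * p.2)
      ((q :: l).map fun q => q.1⁻¹ * q.2⁻¹ * q.1 * q.2).prod)
    rw [List.map_cons, List.prod_cons, abs_le]
    push_cast [List.length_cons] at htail ⊢
    constructor <;> linarith [hcomm.1, hcomm.2, htail.1, htail.2, hmul.1, hmul.2]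

end Quasimorphism

theorem abs_rhemtulla_mul_sub_le {G : Bool → Type*} [∀ i, Group (G i)] [∀ i, DecidableEq (G i)]
    (b : G true) (x y : CoprodI G) :
    |rhemtulla b (x * y) - rhemtulla b x - rhemtulla b y| ≤ 3 :=
  abs_letterBalance_equiv_mul_sub_le b x y

theorem rhemtulla_inv {G : Bool → Type*} [∀ i, Group (G i)] [∀ i, DecidableEq (G i)]
    (b : G true) (x : CoprodI G) : rhemtulla b x⁻¹ = -rhemtulla b x :=
  letterBalance_equiv_inv b x

theorem rhemtulla_prod_comms_bound_general {G : Bool → Type*} [∀ i, Group (G i)]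
    [∀ i, DecidableEq (G i)] (b : G true)
    (k : ℕ) (hk : 1 ≤ k) (x : CoprodI G)
    (l : List (CoprodI G × CoprodI G)) (hl : l.length = k)
    (hx : (l.map fun p => p.1⁻¹ * p.2⁻¹ * p.1 * p.2).prod = x) :
    |rhemtulla b x| ≤ 12 * (k : ℤ) - 3 := by
  subst hx hl
  obtain ⟨p, l, rfl⟩ := List.exists_cons_of_length_pos hk
  have h := abs_apply_prod_commutators_le (abs_rhemtulla_mul_sub_le b) (rhemtulla_inv b) p l
  rwa [show (4 * 3 : ℤ) = 12 by norm_num] at h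

/-- If `x` is a product of `k ≥ 1` commutators in the free product, then
`|w_b(x)| ≤ 12k - 3`, for `b` of order greater than `2`. -/
theorem rhemtulla_prod_comms_bound {G : Bool → Type*} [∀ i, Group (G i)]
    [∀ i, DecidableEq (G i)] (b : G true) (hb : b ^ 2 ≠ 1)
    (k : ℕ) (hk : 1 ≤ k) (x : CoprodI G)
    (l : List (CoprodI G × CoprodI G)) (hl : l.length = k)
    (hx : (l.map fun p => p.1⁻¹ * p.2⁻¹ * p.1 * p.2).prod = x) :
    |rhemtulla b x| ≤ 12 * (k : ℤ) - 3 :=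
  rhemtulla_prod_comms_bound_general b k hk x l hl hx
end

section
/- Let A * B be the free product of groups A and B, and let a ∈ A and b ∈ B be elements of order > 2. Then the commutator lengths of the powers [ab, ba]ⁿ, n ∈ ℕ, are unbounded: sup{cl([ab,ba]ⁿ) : n ∈ ℕ} = ∞. -/
/-!
Rolli's quasimorphisms. For a function `λ` on the letters of `A * B` that is odd on each factor and
bounded by `1`, summing `λ` over the letters of the reduced word of `g` gives a quasimorphism
`φ` of defect at most `3`: the reduced word of `gh` arises from those of `g` and `h` by cancelling
a common segment at the junction and merging at most one pair of letters. A quasimorphism of defect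
`D` is bounded by `(8k + 1) D` on products of `k` commutators. The reduced word
`b⁻¹ a⁻² b⁻¹ a b² a` of `[ab, ba]` is cyclically reduced, so the reduced word of `[ab, ba]ⁿ` is its
`n`-fold concatenation; with `λ = 1` on `a` and `b⁻¹` (and `-1` on their inverses, which differ
from them as the orders exceed `2`), `φ([ab, ba]ⁿ) ≥ 4n`.
-/

/-- The set of elements of `G` expressible as a product of `n` commutators. -/
def IsProdOfNComms {G : Type*} [Group G] (n : ℕ) (g : G) : Prop :=
  ∃ l : List (G × G), l.length = n ∧ (l.map fun p => p.1⁻¹ * p.2⁻¹ * p.1 * p.2).prod = g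

/-- The commutator length of `g`, valued in `ℕ∞` (`⊤` if `g` is not a product
of commutators). -/
noncomputable def cl {G : Type*} [Group G] (g : G) : ℕ∞ :=
  sInf {n : ℕ∞ | ∃ k : ℕ, n = (k : ℕ∞) ∧ IsProdOfNComms k g}

def IsQuasimorphism {H : Type*} [Group H] (f : H → ℤ) (D : ℤ) : Prop :=
  ∀ x y, |f (x * y) - f x - f y| ≤ D

namespace IsQuasimorphism

variable {H : Type*} [Group H] {f : H → ℤ} {D : ℤ}

lemma abs_map_one_le (hf : IsQuasimorphism f D) : |f 1| ≤ D := by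
  simpa [abs_neg] using hf 1 1

lemma abs_map_add_map_inv_le (hf : IsQuasimorphism f D) (x : H) : |f x + f x⁻¹| ≤ 2 * D := by
  have hx := hf x x⁻¹
  have h1 := hf.abs_map_one_le
  rw [mul_inv_cancel] at hx
  rw [abs_le] at *
  constructor <;> linarith

lemma abs_map_commutator_le (hf : IsQuasimorphism f D) (x y : H) :
    |f (x⁻¹ * y⁻¹ * x * y)| ≤ 7 * D := by
  have h1 := hf (x⁻¹ * y⁻¹ * x) y
  have h2 := hf (x⁻¹ * y⁻¹) x
  have h3 := hf x⁻¹ y⁻¹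
  have h4 := hf.abs_map_add_map_inv_le x
  have h5 := hf.abs_map_add_map_inv_le y
  rw [abs_le] at *
  constructor <;> linarith

lemma abs_le_of_isProdOfNComms (hf : IsQuasimorphism f D) {k : ℕ} {g : H}
    (hg : IsProdOfNComms k g) : |f g| ≤ (8 * k + 1) * D := by
  obtain ⟨l, rfl, rfl⟩ := hg
  induction l with
  | nil => simpa using hf.abs_map_one_le
  | cons c l ih =>
    have h1 := hf (c.1⁻¹ * c.2⁻¹ * c.1 * c.2) (l.map fun p => p.1⁻¹ * p.2⁻¹ * p.1 * p.2).prod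
    have h2 := hf.abs_map_commutator_le c.1 c.2
    rw [List.map_cons, List.prod_cons, List.length_cons]
    push_cast
    rw [abs_le] at *
    constructor <;> linarith

lemma lt_cl_of_lt_abs (hf : IsQuasimorphism f D) {m : ℕ} {g : H}
    (hg : (8 * m + 1) * D < |f g|) : (m : ℕ∞) < cl g := by
  refine lt_of_lt_of_le (Nat.cast_lt.2 m.lt_succ_self) (le_sInf ?_)
  rintro _ ⟨k, rfl, hk⟩
  have hD : 0 ≤ D := (abs_nonneg _).trans hf.abs_map_one_le
  have hmk : (m : ℤ) < k := by
    by_contra! hkm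
    have := hf.abs_le_of_isProdOfNComms hk
    nlinarith
  exact_mod_cast hmk

lemma iSup_cl_eq_top {ι : Type*} {s : ι → H} (hf : IsQuasimorphism f D)
    (hs : ∀ N : ℤ, ∃ i, N < |f (s i)|) : ⨆ i, cl (s i) = ⊤ := by
  refine iSup_eq_top.2 fun c hc => ?_
  lift c to ℕ using hc.ne
  obtain ⟨i, hi⟩ := hs ((8 * c + 1) * D)
  exact ⟨i, hf.lt_cl_of_lt_abs hi⟩

end IsQuasimorphism


namespace Monoid.CoprodI

variable {ι : Type*} {M : ι → Type*} [∀ i, Group (M i)]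

def listProd (l : List (Σ i, M i)) : CoprodI M := (l.map fun s => of s.2).prod

@[simp] lemma listProd_nil : listProd ([] : List (Σ i, M i)) = 1 := rfl

@[simp] lemma listProd_cons (s : Σ i, M i) (l : List (Σ i, M i)) :
    listProd (s :: l) = of s.2 * listProd l := by
  simp [listProd]

@[simp] lemma listProd_append (l₁ l₂ : List (Σ i, M i)) :
    listProd (l₁ ++ l₂) = listProd l₁ * listProd l₂ := by
  simp [listProd]

def IsReduced (l : List (Σ i, M i)) : Prop :=
  (∀ s ∈ l, s.2 ≠ 1) ∧ l.IsChain fun s t => s.1 ≠ t.1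

lemma isReduced_cons_iff {s : Σ i, M i} {l : List (Σ i, M i)} :
    IsReduced (s :: l) ↔ s.2 ≠ 1 ∧ (∀ t ∈ l.head?, s.1 ≠ t.1) ∧ IsReduced l := by
  simp only [IsReduced, List.mem_cons, forall_eq_or_imp, List.isChain_cons]
  tauto

lemma isReduced_append_iff {l₁ l₂ : List (Σ i, M i)} :
    IsReduced (l₁ ++ l₂) ↔
      IsReduced l₁ ∧ IsReduced l₂ ∧ ∀ s ∈ l₁.getLast?, ∀ t ∈ l₂.head?, s.1 ≠ t.1 := by
  simp only [IsReduced, List.mem_append, List.isChain_append]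
  grind

lemma IsReduced.reverse {l : List (Σ i, M i)} (h : IsReduced l) : IsReduced l.reverse :=
  ⟨fun s hs => h.1 s (List.mem_reverse.1 hs),
    List.isChain_reverse.2 (h.2.imp fun _ _ => Ne.symm)⟩

lemma IsReduced.flatten_replicate {l : List (Σ i, M i)} (hl : IsReduced l)
    (hcyc : ∀ s ∈ l.getLast?, ∀ t ∈ l.head?, s.1 ≠ t.1) (n : ℕ) :
    IsReduced (List.replicate n l).flatten := by
  induction n with
  | zero => exact ⟨by simp, List.isChain_nil⟩
  | succ n ih =>
    rw [List.replicate_succ, List.flatten_cons, isReduced_append_iff]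
    refine ⟨hl, ih, fun s hs t ht => hcyc s hs t ?_⟩
    cases n with
    | zero => simp at ht
    | succ n => rwa [List.head?_flatten_replicate n.succ_ne_zero] at ht

lemma listProd_flatten_replicate (l : List (Σ i, M i)) (n : ℕ) :
    listProd (List.replicate n l).flatten = listProd l ^ n := by
  induction n with
  | zero => simp
  | succ n ih => rw [List.replicate_succ, List.flatten_cons, listProd_append, ih, pow_succ']

variable [DecidableEq ι] [∀ i, DecidableEq (M i)]

lemma toList_equiv_listProd {l : List (Σ i, M i)} (hl : IsReduced l) :
    (Word.equiv (listProd l)).toList = l :=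
  congrArg Word.toList (Word.equiv.apply_symm_apply ⟨l, hl.1, hl.2⟩)

lemma listProd_toList_equiv (g : CoprodI M) : listProd (Word.equiv g).toList = g :=
  Word.equiv.symm_apply_apply g

/-- For reduced `u` and `v`, the normal form of `listProd u.reverse * listProd v`. The left factor
is stored reversed so that the letter meeting `v` is its head. -/
def reduceRevAppend : List (Σ i, M i) → List (Σ i, M i) → List (Σ i, M i)
  | [], v => v
  | s :: u, [] => (s :: u).reverse
  | ⟨i, x⟩ :: u, ⟨j, y⟩ :: v =>
    if h : i = j then
      if (h ▸ x) * y = 1 then reduceRevAppend u v else u.reverse ++ ⟨j, (h ▸ x) * y⟩ :: v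
    else u.reverse ++ ⟨i, x⟩ :: ⟨j, y⟩ :: v

lemma listProd_reduceRevAppend (u v : List (Σ i, M i)) :
    listProd (reduceRevAppend u v) = listProd u.reverse * listProd v := by
  fun_induction reduceRevAppend u v with
  | case1 v => simp
  | case2 s u => simp
  | case3 u i y v x hxy ih =>
    change x * y = 1 at hxy
    simp [ih, mul_assoc, ← mul_assoc (of x), ← map_mul, hxy]
  | case4 u i y v x hxy => simp [mul_assoc]
  | case5 i x u j y v hij => simp [mul_assoc]

lemma IsReduced.reduceRevAppend {u v : List (Σ i, M i)} (hu : IsReduced u) (hv : IsReduced v) :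
    IsReduced (reduceRevAppend u v) := by
  fun_induction CoprodI.reduceRevAppend u v with
  | case1 v => exact hv
  | case2 s u => exact hu.reverse
  | case3 u i y v x hxy ih =>
    exact ih (isReduced_cons_iff.1 hu).2.2 (isReduced_cons_iff.1 hv).2.2
  | case4 u i y v x hxy =>
    change x * y ≠ 1 at hxy
    rw [isReduced_cons_iff] at hu hv
    simp only [isReduced_append_iff, isReduced_cons_iff, List.getLast?_reverse]
    refine ⟨hu.2.2.reverse, ⟨hxy, hv.2⟩, fun s hs t ht => ?_⟩
    grind
  | case5 i x u j y v hij =>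
    rw [isReduced_cons_iff] at hu hv
    simp only [isReduced_append_iff, isReduced_cons_iff, List.getLast?_reverse]
    refine ⟨hu.2.2.reverse, ?_⟩
    grind

variable {lam : (Σ i, M i) → ℤ}

lemma abs_sum_reduceRevAppend_sub_le (hodd : ∀ i (x : M i), lam ⟨i, x⁻¹⟩ = -lam ⟨i, x⟩)
    (hbd : ∀ s, |lam s| ≤ 1) (u v : List (Σ i, M i)) :
    |((reduceRevAppend u v).map lam).sum - (u.map lam).sum - (v.map lam).sum| ≤ 3 := by
  fun_induction reduceRevAppend u v with
  | case1 v => simp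
  | case2 s u => simp [add_comm]
  | case3 u i y v x hxy ih =>
    change x * y = 1 at hxy
    have hcancel : lam ⟨i, x⟩ + lam ⟨i, y⟩ = 0 := by
      rw [eq_inv_of_mul_eq_one_right hxy, hodd]; ring
    simp only [List.map_cons, List.sum_cons]
    convert ih using 2
    linarith
  | case4 u i y v x hxy =>
    have h1 := hbd ⟨i, x * y⟩
    have h2 := hbd ⟨i, x⟩
    have h3 := hbd ⟨i, y⟩
    simp only [List.map_append, List.map_reverse, List.sum_append, List.sum_reverse,
      List.map_cons, List.sum_cons]
    rw [abs_le] at *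
    constructor <;> linarith
  | case5 i x u j y v hij =>
    simp only [List.map_append, List.map_reverse, List.sum_append, List.sum_reverse,
      List.map_cons, List.sum_cons]
    ring_nf
    simp

noncomputable def rolliSum (lam : (Σ i, M i) → ℤ) (g : CoprodI M) : ℤ :=
  ((Word.equiv g).toList.map lam).sum

lemma rolliSum_listProd {l : List (Σ i, M i)} (hl : IsReduced l) :
    rolliSum lam (listProd l) = (l.map lam).sum := by
  rw [rolliSum, toList_equiv_listProd hl]

lemma isQuasimorphism_rolliSum (hodd : ∀ i (x : M i), lam ⟨i, x⁻¹⟩ = -lam ⟨i, x⟩)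
    (hbd : ∀ s, |lam s| ≤ 1) : IsQuasimorphism (rolliSum lam) 3 := by
  intro g h
  set u := (Word.equiv g).toList
  set v := (Word.equiv h).toList
  have hu : IsReduced u := ⟨(Word.equiv g).ne_one, (Word.equiv g).chain_ne⟩
  have hv : IsReduced v := ⟨(Word.equiv h).ne_one, (Word.equiv h).chain_ne⟩
  have hgh : g * h = listProd (reduceRevAppend u.reverse v) := by
    rw [listProd_reduceRevAppend, List.reverse_reverse, listProd_toList_equiv,
      listProd_toList_equiv]
  have key := abs_sum_reduceRevAppend_sub_le hodd hbd u.reverse v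
  rwa [List.map_reverse, List.sum_reverse, ← rolliSum_listProd (hu.reverse.reduceRevAppend hv),
    ← hgh] at key

lemma iSup_cl_listProd_pow_eq_top (hodd : ∀ i (x : M i), lam ⟨i, x⁻¹⟩ = -lam ⟨i, x⟩)
    (hbd : ∀ s, |lam s| ≤ 1) {l : List (Σ i, M i)} (hl : IsReduced l)
    (hcyc : ∀ s ∈ l.getLast?, ∀ t ∈ l.head?, s.1 ≠ t.1) (hpos : 0 < (l.map lam).sum) :
    ⨆ n : ℕ, cl (listProd l ^ n) = ⊤ := by
  refine (isQuasimorphism_rolliSum hodd hbd).iSup_cl_eq_top fun N => ⟨N.toNat + 1, ?_⟩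
  rw [← listProd_flatten_replicate, rolliSum_listProd (hl.flatten_replicate hcyc _)]
  simp only [List.map_flatten, List.map_replicate, List.sum_flatten, List.sum_replicate,
    nsmul_eq_mul]
  rw [abs_of_nonneg (by positivity)]
  push_cast
  nlinarith [Int.self_le_toNat N]

end Monoid.CoprodI

section OddIndicator

variable {H : Type*} [Group H] [DecidableEq H]

def oddIndicator (x g : H) : ℤ :=
  if g = x then 1 else if g = x⁻¹ then -1 else 0

lemma abs_oddIndicator_le (x g : H) : |oddIndicator x g| ≤ 1 := by
  unfold oddIndicator; split_ifs <;> simp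

lemma oddIndicator_self (x : H) : oddIndicator x x = 1 := if_pos rfl

lemma oddIndicator_nonneg {x g : H} (hg : g ≠ x⁻¹) : 0 ≤ oddIndicator x g := by
  unfold oddIndicator; split_ifs <;> simp_all

lemma oddIndicator_inv {x : H} (hx : x ^ 2 ≠ 1) (g : H) :
    oddIndicator x g⁻¹ = -oddIndicator x g := by
  have hx' : x⁻¹ ≠ x := by
    rwa [Ne, inv_eq_iff_mul_eq_one, ← sq]
  unfold oddIndicator
  by_cases h₁ : g = x <;> by_cases h₂ : g = x⁻¹ <;> simp_all [inv_eq_iff_eq_inv]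

end OddIndicator

section CommutatorWord

open Monoid CoprodI

variable {G : Bool → Type*} [∀ i, Group (G i)]

def commWord (a : G false) (b : G true) : List (Σ i, G i) :=
  [⟨true, b⁻¹⟩, ⟨false, a⁻¹ * a⁻¹⟩, ⟨true, b⁻¹⟩, ⟨false, a⟩, ⟨true, b * b⟩, ⟨false, a⟩]

lemma listProd_commWord (a : G false) (b : G true) :
    listProd (commWord a b) =
      (of a * of b)⁻¹ * (of b * of a)⁻¹ * (of a * of b) * (of b * of a) := by
  simp only [commWord, listProd_cons, listProd_nil, map_mul, map_inv]
  group

lemma isReduced_commWord {a : G false} {b : G true} (ha : a ^ 2 ≠ 1) (hb : b ^ 2 ≠ 1) :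
    IsReduced (commWord a b) := by
  refine ⟨?_, by simp [commWord]⟩
  have ha₁ : a ≠ 1 := by rintro rfl; simp at ha
  have hb₁ : b ≠ 1 := by rintro rfl; simp at hb
  simp only [commWord, List.mem_cons, List.not_mem_nil, or_false, forall_eq_or_imp, ← sq]
  simp_all

end CommutatorWord

open Monoid

/-- In a free product `A * B` with `a ∈ A`, `b ∈ B` of order greater than `2`,
the commutator lengths of the powers `[ab, ba]ⁿ` are unbounded. -/
theorem cl_comm_ab_ba_pow_unbounded {G : Bool → Type*} [∀ i, Group (G i)]
    (a : G false) (ha : a ^ 2 ≠ 1) (b : G true) (hb : b ^ 2 ≠ 1) :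
    (⨆ n : ℕ, cl (((CoprodI.of a * CoprodI.of b)⁻¹ * (CoprodI.of b * CoprodI.of a)⁻¹ *
      (CoprodI.of a * CoprodI.of b) * (CoprodI.of b * CoprodI.of a)) ^ n)) = ⊤ := by
  classical
  let x : ∀ i, G i := fun i => Bool.rec a b⁻¹ i
  have hx : ∀ i, x i ^ 2 ≠ 1 := by
    rintro (_ | _)
    · exact ha
    · simpa [x, inv_pow] using hb
  have ha₁ : a ≠ 1 := by rintro rfl; simp at ha
  have hb₁ : b ≠ 1 := by rintro rfl; simp at hb
  have hweight : 0 < ((commWord a b).map fun s => oddIndicator (x s.1) s.2).sum := by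
    have h₁ := oddIndicator_nonneg (x := a) (g := a⁻¹ * a⁻¹) (by simpa using ha₁)
    have h₂ := oddIndicator_nonneg (x := b⁻¹) (g := b * b) (by simpa using hb₁)
    simp only [commWord, List.map_cons, List.map_nil, List.sum_cons, List.sum_nil, x,
      oddIndicator_self]
    linarith
  rw [← listProd_commWord]
  exact CoprodI.iSup_cl_listProd_pow_eq_top (fun i g => oddIndicator_inv (hx i) g)
    (fun _ => abs_oddIndicator_le _ _) (isReduced_commWord ha hb) (by simp [commWord]) hweight
end

section
/- Let A*B be the free product of groups A and B, b ∈ B of order > 2, and w_b the Rhemtulla function. Then for any x, y ∈ A*B, |w_b(xy)| ≤ |w_b(x)| + |w_b(y)| + 3. -/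
/-!
Multiplying two reduced words cancels a suffix of the first against the formal inverse of a
prefix of the second, after which the two letters that meet may merge into one. The function
`w_b` is a sum over the letters of the reduced word that changes sign under inverting a letter,
so the cancelled parts contribute opposite amounts to `w_b(x)` and `w_b(y)`. Only the at most
three letters involved in a merge can spoil additivity, each by at most `1`.
-/

open Monoid

namespace Monoid.CoprodI.Word

section Letters

variable {ι : Type*} {G : ι → Type*} [∀ i, Group (G i)]

def letterInv (a : Σ i, G i) : Σ i, G i := ⟨a.1, a.2⁻¹⟩

theorem letterInv_involutive : Function.Involutive (letterInv (G := G)) :=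
  fun _ ↦ Sigma.ext rfl (heq_of_eq (inv_inv _))

def invRev (l : List (Σ i, G i)) : List (Σ i, G i) := (l.map letterInv).reverse

theorem sum_map_invRev {R : Type*} [AddCommGroup R] (f : (Σ i, G i) → R)
    (hf : ∀ a, f (letterInv a) = -f a) (l : List (Σ i, G i)) :
    ((invRev l).map f).sum = -(l.map f).sum := by
  simp only [invRev, List.map_reverse, List.sum_reverse, List.map_map]
  induction l with
  | nil => simp
  | cons a l ih => simp [ih, hf, add_comm]

inductive MulShape : List (Σ i, G i) → List (Σ i, G i) → List (Σ i, G i) → Prop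
  | cancel (p s q : List (Σ i, G i)) : MulShape (p ++ s) (invRev s ++ q) (p ++ q)
  | merge (p s q : List (Σ i, G i)) {j : ι} (g h : G j) :
      MulShape (p ++ ⟨j, g⟩ :: s) (invRev s ++ ⟨j, h⟩ :: q) (p ++ ⟨j, g * h⟩ :: q)

theorem MulShape.cons {l₁ l₂ l₃ : List (Σ i, G i)} (h : MulShape l₁ l₂ l₃) (a : Σ i, G i) :
    MulShape (a :: l₁) l₂ (a :: l₃) := by
  cases h with
  | cancel p s q => exact .cancel (a :: p) s q
  | merge p s q g h => exact .merge (a :: p) s q g h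

theorem MulShape.abs_sum_map_le {f : (Σ i, G i) → ℤ} (hf : ∀ a, f (letterInv a) = -f a)
    (hf₁ : ∀ a, |f a| ≤ 1) {l₁ l₂ l₃ : List (Σ i, G i)} (h : MulShape l₁ l₂ l₃) :
    |(l₃.map f).sum| ≤ |(l₁.map f).sum| + |(l₂.map f).sum| + 3 := by
  cases h with
  | cancel p s q =>
    simp only [List.map_append, List.sum_append, sum_map_invRev f hf]
    calc _ = |((p.map f).sum + (s.map f).sum) + (-(s.map f).sum + (q.map f).sum)| := by ring_nf
      _ ≤ _ := abs_add_le _ _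
      _ ≤ _ := by linarith
  | merge p s q g h =>
    have hmerge : |f ⟨_, g * h⟩ - f ⟨_, g⟩ - f ⟨_, h⟩| ≤ 3 :=
      calc _ ≤ |f ⟨_, g * h⟩| + |f ⟨_, g⟩| + |f ⟨_, h⟩| :=
            (abs_sub _ _).trans (add_le_add_left (abs_sub _ _) _)
        _ ≤ 3 := by linarith [hf₁ ⟨_, g * h⟩, hf₁ ⟨_, g⟩, hf₁ ⟨_, h⟩]
    simp only [List.map_append, List.map_cons, List.sum_append, List.sum_cons,
      sum_map_invRev f hf]
    calc _ = |((p.map f).sum + (f ⟨_, g⟩ + (s.map f).sum)) +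
          (-(s.map f).sum + (f ⟨_, h⟩ + (q.map f).sum)) +
          (f ⟨_, g * h⟩ - f ⟨_, g⟩ - f ⟨_, h⟩)| := by ring_nf
      _ ≤ _ := abs_add_three _ _ _
      _ ≤ _ := by linarith

end Letters

variable {ι : Type*} [DecidableEq ι] {G : ι → Type*} [∀ i, Group (G i)]
  [∀ i, DecidableEq (G i)]

theorem toList_of_smul_of_fstIdx_ne {i : ι} {m : G i} (hm : m ≠ 1) {w : Word G}
    (hw : w.fstIdx ≠ some i) : (of m • w).toList = ⟨i, m⟩ :: w.toList := by
  rw [← cons_eq_smul (h1 := hw) (h2 := hm), cons_toList]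

theorem toList_of_smul_of_toList_eq_cons {i : ι} (m : G i) {w : Word G} {a : G i}
    {l : List (Σ i, G i)} (hw : w.toList = ⟨i, a⟩ :: l) :
    (of m • w).toList = if m * a = 1 then l else ⟨i, m * a⟩ :: l := by
  cases w using consRecOn with
  | empty => simp at hw
  | cons j a' t ht _ =>
    obtain ⟨⟨rfl, ⟨⟩⟩, rfl⟩ := List.cons_eq_cons.mp hw
    rw [cons_eq_smul, smul_smul, ← map_mul, ← rcons_eq_smul ⟨m * a, t, ht⟩, rcons]
    split_ifs <;> rfl

theorem MulShape.of_smul {i : ι} {m : G i} (hm : m ≠ 1) {w u v : Word G}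
    (hw : w.fstIdx ≠ some i) (h : MulShape w.toList u.toList v.toList) :
    MulShape (⟨i, m⟩ :: w.toList) u.toList (of m • v).toList := by
  generalize hl₁ : w.toList = l₁ at h
  generalize u.toList = l₂ at h ⊢
  generalize hl₃ : v.toList = l₃ at h
  -- `m` only interacts with a first letter of `v` from `G i`, which must then come from `u`
  have prepend (hv : v.fstIdx ≠ some i) : MulShape (⟨i, m⟩ :: l₁) l₂ (of m • v).toList := by
    rw [toList_of_smul_of_fstIdx_ne hm hv, hl₃]
    exact h.cons _
  cases h with
  | cancel p s q =>
    rcases p with _ | ⟨a, p⟩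
    · rcases q with _ | ⟨⟨j, h⟩, q⟩
      · exact prepend (by simp [fstIdx, hl₃])
      by_cases hj : j = i
      · subst hj
        rw [toList_of_smul_of_toList_eq_cons m hl₃]
        split_ifs with hmh
        · convert MulShape.cancel [] (⟨j, m⟩ :: s) q using 1 <;>
            simp [invRev, letterInv, eq_inv_of_mul_eq_one_right hmh]
        · exact .merge [] s q m h
      · exact prepend (by simp [fstIdx, hl₃, hj])
    · exact prepend (by simpa [fstIdx, hl₁, hl₃] using hw)
  | merge p s q g h =>
    rcases p with _ | ⟨a, p⟩ <;> exact prepend (by simpa [fstIdx, hl₁, hl₃] using hw)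

theorem mulShape_prod_smul (w u : Word G) : MulShape w.toList u.toList (w.prod • u).toList := by
  induction w using consRecOn with
  | empty => simpa [invRev] using MulShape.cancel [] [] u.toList
  | cons i m w hw hm ih =>
    rw [prod_cons, mul_smul]
    exact ih.of_smul hm hw

theorem abs_sum_map_toList_equiv_mul_le {f : (Σ i, G i) → ℤ}
    (hf : ∀ a, f (letterInv a) = -f a) (hf₁ : ∀ a, |f a| ≤ 1) (x y : CoprodI G) :
    |((equiv (x * y)).toList.map f).sum| ≤
      |((equiv x).toList.map f).sum| + |((equiv y).toList.map f).sum| + 3 := by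
  have hx : (equiv x).prod = x := equiv.symm_apply_apply x
  have hxy : x • equiv y = equiv (x * y) := (mul_smul x y (empty : Word G)).symm
  simpa only [hx, hxy] using (mulShape_prod_smul (equiv x) (equiv y)).abs_sum_map_le hf hf₁

def signedIndicator (c a : Σ i, G i) : ℤ :=
  (if a = c then 1 else 0) - (if a = letterInv c then 1 else 0)

theorem signedIndicator_letterInv (c a : Σ i, G i) :
    signedIndicator c (letterInv a) = -signedIndicator c a := by
  simp only [signedIndicator, letterInv_involutive.eq_iff, letterInv_involutive c]
  ring

theorem abs_signedIndicator_le (c a : Σ i, G i) : |signedIndicator c a| ≤ 1 := by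
  unfold signedIndicator
  split_ifs <;> simp

theorem count_sub_count_letterInv (c : Σ i, G i) (l : List (Σ i, G i)) :
    (l.count c : ℤ) - l.count (letterInv c) = (l.map (signedIndicator c)).sum := by
  induction l with
  | nil => simp
  | cons a l ih =>
    simp only [List.count_cons, beq_iff_eq, List.map_cons, List.sum_cons, ← ih, signedIndicator]
    push_cast
    ring

end Monoid.CoprodI.Word

open CoprodI.Word

theorem rhemtulla_eq_sum_map_signedIndicator {G : Bool → Type*} [∀ i, Group (G i)]
    [∀ i, DecidableEq (G i)] (b : G true) (x : CoprodI G) :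
    rhemtulla b x = ((equiv x).toList.map (signedIndicator ⟨true, b⟩)).sum :=
  count_sub_count_letterInv _ _

theorem rhemtulla_mul_bound_general {G : Bool → Type*} [∀ i, Group (G i)]
    [∀ i, DecidableEq (G i)] (b : G true) (x y : CoprodI G) :
    |rhemtulla b (x * y)| ≤ |rhemtulla b x| + |rhemtulla b y| + 3 := by
  simp only [rhemtulla_eq_sum_map_signedIndicator]
  exact abs_sum_map_toList_equiv_mul_le (signedIndicator_letterInv _) (abs_signedIndicator_le _) x y

/-- For any `x, y` in the free product, `|w_b(xy)| ≤ |w_b(x)| + |w_b(y)| + 3`. -/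
theorem rhemtulla_mul_bound {G : Bool → Type*} [∀ i, Group (G i)]
    [∀ i, DecidableEq (G i)] (b : G true) (hb : b ^ 2 ≠ 1) (x y : CoprodI G) :
    |rhemtulla b (x * y)| ≤ |rhemtulla b x| + |rhemtulla b y| + 3 :=
  rhemtulla_mul_bound_general b x y
end

section
/- Let A*B be the free product of groups A and B, b ∈ B of order > 2, and w_b the Rhemtulla function. Then for any single commutator [x,y] with x, y ∈ A*B, |w_b([x,y])| ≤ 9. -/
/-!
In the reduced form of `x * y`, a suffix of the reduced word of `x` cancels against the inverse
prefix of the reduced word of `y`, and at most one further pair of letters from the same factor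
merges into a single letter. Hence any letter weight `d` with `d (g⁻¹) = -d g` and `|d| ≤ 1`,
summed over reduced words, is a quasimorphism of defect at most `3` that is odd under inversion.
Writing `[x, y]` as a product of four factors whose weights cancel in pairs costs three defects.
-/

open Monoid

theorem abs_inv_mul_inv_mul_mul_le {H : Type*} [Group H] (f : H → ℤ) (D : ℤ)
    (hinv : ∀ x, f x⁻¹ = -f x) (hmul : ∀ x y, |f (x * y) - f x - f y| ≤ D) (x y : H) :
    |f (x⁻¹ * y⁻¹ * x * y)| ≤ 3 * D := by
  have h₁ := abs_le.mp (hmul (x⁻¹ * y⁻¹ * x) y)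
  have h₂ := abs_le.mp (hmul (x⁻¹ * y⁻¹) x)
  have h₃ := abs_le.mp (hmul x⁻¹ y⁻¹)
  rw [hinv, hinv] at h₃
  rw [abs_le]
  constructor <;> linarith [h₁.1, h₁.2, h₂.1, h₂.2, h₃.1, h₃.2]

namespace Monoid.CoprodI

open Word

variable {ι : Type*} {G : ι → Type*} [∀ i, Group (G i)]

def letterInv (p : Σ i, G i) : Σ i, G i := ⟨p.1, p.2⁻¹⟩

theorem letterInv_involutive : Function.Involutive (letterInv (G := G)) := fun p =>
  Sigma.ext rfl (heq_of_eq (inv_inv p.2))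

def invRev (l : List (Σ i, G i)) : List (Σ i, G i) := (l.map letterInv).reverse

theorem invRev_cons (p : Σ i, G i) (l : List (Σ i, G i)) :
    invRev (p :: l) = invRev l ++ [letterInv p] := by
  simp [invRev]

theorem sum_map_invRev (d : (Σ i, G i) → ℤ) (hd : ∀ p, d (letterInv p) = -d p)
    (l : List (Σ i, G i)) : ((invRev l).map d).sum = -(l.map d).sum := by
  induction l with
  | nil => rfl
  | cons p l ih => simp [invRev_cons, ih, hd, add_comm]

def IsReducedConcat (u v r : List (Σ i, G i)) : Prop :=
  (∃ u₁ s v₂, u = u₁ ++ s ∧ v = invRev s ++ v₂ ∧ r = u₁ ++ v₂) ∨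
    ∃ (u₁ s v₂ : List (Σ i, G i)) (i : ι) (a c : G i),
      u = u₁ ++ ⟨i, a⟩ :: s ∧ v = invRev s ++ ⟨i, c⟩ :: v₂ ∧ r = u₁ ++ ⟨i, a * c⟩ :: v₂

namespace IsReducedConcat

variable {u v r : List (Σ i, G i)}

theorem cons (p : Σ i, G i) (h : IsReducedConcat u v r) :
    IsReducedConcat (p :: u) v (p :: r) := by
  rcases h with ⟨u₁, s, v₂, rfl, rfl, rfl⟩ | ⟨u₁, s, v₂, i, a, c, rfl, rfl, rfl⟩
  · exact Or.inl ⟨p :: u₁, s, v₂, rfl, rfl, rfl⟩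
  · exact Or.inr ⟨p :: u₁, s, v₂, i, a, c, rfl, rfl, rfl⟩

theorem eq_invRev_append {i : ι} {c : G i} {t : List (Σ i, G i)}
    (h : IsReducedConcat u v (⟨i, c⟩ :: t)) (hu : ∀ p ∈ u.head?, i ≠ p.1) :
    v = invRev u ++ ⟨i, c⟩ :: t := by
  rcases h with ⟨_ | ⟨p, u₁⟩, s, v₂, rfl, rfl, hr⟩ | ⟨_ | ⟨p, u₁⟩, s, v₂, j, a, c', rfl, rfl, hr⟩
  · simp_all
  · simp only [List.cons_append, List.cons.injEq] at hr
    exact absurd (by rw [← hr.1]) (hu p (by simp))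
  · simp only [List.nil_append, List.cons.injEq, Sigma.mk.injEq] at hr
    exact absurd hr.1.1 (hu ⟨j, a⟩ (by simp))
  · simp only [List.cons_append, List.cons.injEq] at hr
    exact absurd (by rw [← hr.1]) (hu p (by simp))

theorem eq_invRev_of_nil (h : IsReducedConcat u v []) : v = invRev u := by
  rcases h with ⟨u₁, s, v₂, rfl, rfl, hr⟩ | ⟨u₁, s, v₂, i, a, c, -, -, hr⟩
  · obtain ⟨rfl, rfl⟩ := List.append_eq_nil_iff.mp hr.symm
    simp
  · simp at hr

theorem abs_sum_sub_le (d : (Σ i, G i) → ℤ) (hd : ∀ p, d (letterInv p) = -d p)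
    (hd₁ : ∀ p, |d p| ≤ 1) (h : IsReducedConcat u v r) :
    |(r.map d).sum - (u.map d).sum - (v.map d).sum| ≤ 3 := by
  rcases h with ⟨u₁, s, v₂, rfl, rfl, rfl⟩ | ⟨u₁, s, v₂, i, a, c, rfl, rfl, rfl⟩
  · simp only [List.map_append, List.sum_append, sum_map_invRev d hd]
    ring_nf
    simp
  · simp only [List.map_append, List.map_cons, List.sum_append, List.sum_cons,
      sum_map_invRev d hd]
    have e₁ := abs_le.mp (hd₁ ⟨i, a * c⟩)
    have e₂ := abs_le.mp (hd₁ ⟨i, a⟩)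
    have e₃ := abs_le.mp (hd₁ ⟨i, c⟩)
    rw [abs_le]
    constructor <;> linarith [e₁.1, e₁.2, e₂.1, e₂.2, e₃.1, e₃.2]

end IsReducedConcat

variable [DecidableEq ι] [∀ i, DecidableEq (G i)]

theorem Word.toList_of_smul {i : ι} (a : G i) {t : Word G} (ht : t.fstIdx ≠ some i) :
    (of a • t).toList = if a = 1 then t.toList else ⟨i, a⟩ :: t.toList := by
  split_ifs with ha
  · simp [ha]
  · rw [← cons_eq_smul (h1 := ht) (h2 := ha)]
    rfl

theorem IsReducedConcat.of_smul {i : ι} {m : G i} (hm : m ≠ 1) {w r : Word G}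
    (hw : w.fstIdx ≠ some i) {v : List (Σ i, G i)} (h : IsReducedConcat w.toList v r.toList) :
    IsReducedConcat (⟨i, m⟩ :: w.toList) v (of m • r).toList := by
  set p := equivPair i r
  have hr : of p.head • p.tail = r := equivPair_head_smul_equivPair_tail r
  rw [← hr, toList_of_smul _ p.fstIdx_ne] at h
  rw [← hr, ← mul_smul, ← map_mul, toList_of_smul _ p.fstIdx_ne]
  by_cases hc : p.head = 1
  · rw [if_pos hc] at h
    rw [hc, mul_one, if_neg hm]
    exact h.cons _
  · rw [if_neg hc] at h
    have hv := h.eq_invRev_append (fstIdx_ne_iff.mp hw)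
    split_ifs with hmc
    · refine Or.inl ⟨[], ⟨i, m⟩ :: w.toList, p.tail.toList, rfl, ?_, rfl⟩
      rw [hv, invRev_cons, eq_inv_of_mul_eq_one_right hmc]
      simp [letterInv]
    · exact Or.inr ⟨[], w.toList, p.tail.toList, i, m, p.head, rfl, hv, rfl⟩

theorem Word.isReducedConcat_prod_smul (u v : Word G) :
    IsReducedConcat u.toList v.toList (u.prod • v).toList := by
  induction u using consRecOn with
  | empty => exact Or.inl ⟨[], [], v.toList, rfl, rfl, by simp⟩
  | cons i m w hw hm ih =>
    rw [prod_cons, mul_smul]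
    exact ih.of_smul hm hw

theorem isReducedConcat_equiv_mul (x y : CoprodI G) :
    IsReducedConcat (equiv x).toList (equiv y).toList (equiv (x * y)).toList := by
  have hx : (equiv x).prod = x := equiv.symm_apply_apply x
  convert isReducedConcat_prod_smul (equiv x) (equiv y) using 2
  rw [hx]
  exact mul_smul x y (empty : Word G)

theorem toList_equiv_inv (x : CoprodI G) : (equiv x⁻¹).toList = invRev (equiv x).toList := by
  have h := isReducedConcat_equiv_mul x x⁻¹
  rw [mul_inv_cancel] at h
  exact h.eq_invRev_of_nil

section LetterSum

variable (d : (Σ i, G i) → ℤ)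

def letterSum (x : CoprodI G) : ℤ := ((equiv x).toList.map d).sum

theorem letterSum_inv (hd : ∀ p, d (letterInv p) = -d p) (x : CoprodI G) :
    letterSum d x⁻¹ = -letterSum d x := by
  rw [letterSum, toList_equiv_inv, sum_map_invRev d hd, letterSum]

theorem abs_letterSum_mul_sub_le (hd : ∀ p, d (letterInv p) = -d p) (hd₁ : ∀ p, |d p| ≤ 1)
    (x y : CoprodI G) : |letterSum d (x * y) - letterSum d x - letterSum d y| ≤ 3 :=
  (isReducedConcat_equiv_mul x y).abs_sum_sub_le d hd hd₁

theorem abs_letterSum_commutator_le (hd : ∀ p, d (letterInv p) = -d p) (hd₁ : ∀ p, |d p| ≤ 1)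
    (x y : CoprodI G) : |letterSum d (x⁻¹ * y⁻¹ * x * y)| ≤ 9 :=
  abs_inv_mul_inv_mul_mul_le _ 3 (letterSum_inv d hd) (abs_letterSum_mul_sub_le d hd hd₁) x y

end LetterSum

section LetterWeight

variable {i : ι} (b : G i)

def letterWeight (p : Σ i, G i) : ℤ :=
  (if p = ⟨i, b⟩ then 1 else 0) - (if p = ⟨i, b⁻¹⟩ then 1 else 0)

theorem letterWeight_letterInv (p : Σ i, G i) :
    letterWeight b (letterInv p) = -letterWeight b p := by
  have h₁ : letterInv p = ⟨i, b⟩ ↔ p = ⟨i, b⁻¹⟩ := letterInv_involutive.eq_iff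
  have h₂ : letterInv p = ⟨i, b⁻¹⟩ ↔ p = ⟨i, b⟩ := by
    rw [letterInv_involutive.eq_iff, letterInv, inv_inv]
  simp only [letterWeight, h₁, h₂]
  ring

theorem abs_letterWeight_le_one (p : Σ i, G i) : |letterWeight b p| ≤ 1 := by
  unfold letterWeight
  split_ifs <;> simp

theorem sum_map_letterWeight (l : List (Σ i, G i)) :
    (l.map (letterWeight b)).sum = (l.count ⟨i, b⟩ : ℤ) - l.count ⟨i, b⁻¹⟩ := by
  induction l with
  | nil => simp
  | cons p l ih =>
    simp only [List.map_cons, List.sum_cons, ih, List.count_cons, beq_iff_eq, letterWeight]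
    push_cast
    split_ifs <;> ring

end LetterWeight

end Monoid.CoprodI

theorem rhemtulla_eq_letterSum {G : Bool → Type*} [∀ i, Group (G i)] [∀ i, DecidableEq (G i)]
    (b : G true) : rhemtulla b = CoprodI.letterSum (CoprodI.letterWeight b) := by
  funext x
  rw [rhemtulla, CoprodI.letterSum, CoprodI.sum_map_letterWeight]

theorem rhemtulla_comm_bound_general {G : Bool → Type*} [∀ i, Group (G i)]
    [∀ i, DecidableEq (G i)] (b : G true) (x y : CoprodI G) :
    |rhemtulla b (x⁻¹ * y⁻¹ * x * y)| ≤ 9 := by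
  rw [rhemtulla_eq_letterSum]
  exact CoprodI.abs_letterSum_commutator_le _ (CoprodI.letterWeight_letterInv b)
    (CoprodI.abs_letterWeight_le_one b) x y

/-- For any single commutator `[x,y]` in the free product, `|w_b([x,y])| ≤ 9`. -/
theorem rhemtulla_comm_bound {G : Bool → Type*} [∀ i, Group (G i)]
    [∀ i, DecidableEq (G i)] (b : G true) (hb : b ^ 2 ≠ 1) (x y : CoprodI G) :
    |rhemtulla b (x⁻¹ * y⁻¹ * x * y)| ≤ 9 :=
  rhemtulla_comm_bound_general b x y
end

section
/- Let A be an abelian group. If Hom(A,ℤ) = 0 and Ext¹(A,ℤ) = 0, then A = 0. -/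
open CategoryTheory
open CategoryTheory.Limits

noncomputable section

abbrev QZ : Type := AddCircle (1 : ℚ)

def qzmk : ℚ →+ QZ := QuotientAddGroup.mk' _

lemma qzmk_surjective : Function.Surjective qzmk :=
  QuotientAddGroup.mk'_surjective _

lemma qzmk_eq_zero_iff (x : ℚ) : qzmk x = 0 ↔ ∃ k : ℤ, (k : ℚ) = x := by
  rw [qzmk, QuotientAddGroup.mk'_apply, QuotientAddGroup.eq_zero_iff]
  simp [AddSubgroup.mem_zmultiples_iff, zsmul_eq_mul]

/-- Every character `M →+ ℚ/ℤ` lifts to `ℚ`. -/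
def CharLifts (M : Type) [AddCommGroup M] : Prop :=
  ∀ c : M →+ QZ, ∃ g : M →+ ℚ, ∀ x, qzmk (g x) = c x

theorem charLifts_of_extVanish (A : Type) [AddCommGroup A]
    (hExt : Subsingleton (((Ext ℤ (ModuleCat ℤ) 1).obj
      (Opposite.op (ModuleCat.of ℤ A))).obj (ModuleCat.of ℤ ℤ))) :
    CharLifts A := by
  classical
  set M : ModuleCat ℤ := ModuleCat.of ℤ A with hM
  have hpr : HasProjectiveResolution M := inferInstance
  obtain ⟨P⟩ := hpr.out
  set K := P.complex.linearYonedaObj ℤ (ModuleCat.of ℤ ℤ) with hK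
  have hiso := P.isoExt (R := ℤ) 1 (ModuleCat.of ℤ ℤ)
  have hsub : Subsingleton (K.homology 1) := by
    have e := ((forget (ModuleCat ℤ)).mapIso hiso).toEquiv
    exact Equiv.subsingleton e.symm
  have hexact : K.ExactAt 1 :=
    (HomologicalComplex.exactAt_iff_isZero_homology K 1).mpr
      (ModuleCat.isZero_of_subsingleton _)
  rw [HomologicalComplex.exactAt_iff' K 0 1 2 (by simp) (by simp)] at hexact
  rw [ShortComplex.moduleCat_exact_iff] at hexact
  intro c
  let Nq : ModuleCat ℤ := ModuleCat.of ℤ ℚ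
  let Nz : ModuleCat ℤ := ModuleCat.of ℤ ℤ
  let Nqz : ModuleCat ℤ := ModuleCat.of ℤ QZ
  let modq : Nq ⟶ Nqz := ModuleCat.ofHom qzmk.toIntLinearMap
  have hmod_epi : Epi modq := (ModuleCat.epi_iff_surjective _).mpr qzmk_surjective
  let cM : M ⟶ Nqz := ModuleCat.ofHom c.toIntLinearMap
  let π0 : P.complex.X 0 ⟶ M := P.π.f 0
  let h : P.complex.X 0 ⟶ Nq := Projective.factorThru (π0 ≫ cM) modq
  have hh : h ≫ modq = π0 ≫ cM := Projective.factorThru_comp _ _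
  set u : P.complex.X 1 ⟶ Nq := P.complex.d 1 0 ≫ h with hu_def
  have hu : u ≫ modq = 0 := by
    rw [hu_def, Category.assoc, hh, ← Category.assoc,
      show P.complex.d 1 0 ≫ π0 = 0 from P.complex_d_comp_π_f_zero, Limits.zero_comp]
  have hden : ∀ x : P.complex.X 1, (u x).den = 1 := by
    intro x
    have hx : qzmk (u x) = 0 := by
      have := ConcreteCategory.congr_hom hu x
      exact this
    obtain ⟨k, hk⟩ := (qzmk_eq_zero_iff _).mp hx
    rw [← hk]; exact Rat.den_intCast k
  have hcast : ∀ x : P.complex.X 1, ((u x).num : ℚ) = u x := by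
    intro x
    exact (Rat.den_eq_one_iff _).mp (hden x)
  -- identify `Nz` with the kernel of `modq`
  set Km := LinearMap.ker (modq.hom : ℚ →ₗ[ℤ] QZ) with hKm
  let sub : ModuleCat.of ℤ ↥Km ⟶ Nq := ModuleCat.ofHom Km.subtype
  have hsub0 : sub ≫ modq = 0 := by
    apply ModuleCat.hom_ext
    apply LinearMap.ext
    rintro ⟨x, hx⟩
    exact hx
  have hsubmono : Mono sub := by
    rw [ModuleCat.mono_iff_injective]
    exact Subtype.coe_injective
  let ℓ0 : ℤ →ₗ[ℤ] ℚ := LinearMap.toSpanSingleton ℤ ℚ 1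
  have hℓ0 : ∀ k : ℤ, ℓ0 k = (k : ℚ) := by
    intro k
    simp [ℓ0, LinearMap.toSpanSingleton_apply]
  let ℓ : ℤ →ₗ[ℤ] ↥Km := LinearMap.codRestrict Km ℓ0 (fun k => by
    rw [LinearMap.mem_ker]
    show qzmk (ℓ0 k) = 0
    rw [qzmk_eq_zero_iff]
    exact ⟨k, (hℓ0 k).symm⟩)
  have hℓbij : Function.Bijective ℓ := by
    constructor
    · intro x y hxy
      have : ℓ0 x = ℓ0 y := congrArg Subtype.val hxy
      rw [hℓ0, hℓ0] at this
      exact_mod_cast this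
    · rintro ⟨x, hx⟩
      have : qzmk x = 0 := hx
      obtain ⟨k, hk⟩ := (qzmk_eq_zero_iff _).mp this
      exact ⟨k, Subtype.ext (by show ℓ0 k = x; rw [hℓ0]; exact hk)⟩
  let e : ModuleCat.of ℤ ℤ ≅ ModuleCat.of ℤ ↥Km :=
    (LinearEquiv.ofBijective ℓ hℓbij).toModuleIso
  -- lift `u` through the kernel
  obtain ⟨ℓu, hℓu⟩ : { l : P.complex.X 1 ⟶ ModuleCat.of ℤ ↥Km // l ≫ sub = u } := KernelFork.IsLimit.lift' (ModuleCat.kernelIsLimit modq) u hu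
  have hℓu' : ℓu ≫ sub = u := hℓu
  let f : P.complex.X 1 ⟶ Nz := ℓu ≫ e.inv
  let ι : Nz ⟶ Nq := e.hom ≫ sub
  have hι0 : ι ≫ modq = 0 := by
    rw [Category.assoc (e.hom), hsub0, Limits.comp_zero]
  have hfu : f ≫ ι = u := by
    show (ℓu ≫ e.inv) ≫ (e.hom ≫ sub) = u
    rw [Category.assoc, ← Category.assoc e.inv, e.inv_hom_id, Category.id_comp]
    exact hℓu'
  have hcocycle : P.complex.d 2 1 ≫ f = 0 := by
    have h21 : P.complex.d 2 1 ≫ u = 0 := by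
      rw [hu_def, ← Category.assoc, HomologicalComplex.d_comp_d, Limits.zero_comp]
    have : P.complex.d 2 1 ≫ ℓu = 0 := by
      rw [← cancel_mono sub, Category.assoc, hℓu', h21, Limits.zero_comp]
    show P.complex.d 2 1 ≫ ℓu ≫ e.inv = 0
    rw [← Category.assoc, this, Limits.zero_comp]
  have hKd : ∀ (φ : (P.complex.X 0 ⟶ ModuleCat.of ℤ ℤ)), K.d 0 1 φ = P.complex.d 1 0 ≫ φ :=
    fun φ => rfl
  have hKd' : ∀ (φ : (P.complex.X 1 ⟶ ModuleCat.of ℤ ℤ)), K.d 1 2 φ = P.complex.d 2 1 ≫ φ :=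
    fun φ => rfl
  obtain ⟨g', hg'⟩ : ∃ g' : P.complex.X 0 ⟶ ModuleCat.of ℤ ℤ, K.d 0 1 g' = f := hexact f (by
    show K.d 1 2 f = 0
    rw [hKd']
    exact hcocycle)
  have hg : P.complex.d 1 0 ≫ g' = f := by
    rw [← hKd]
    exact hg'
  let w : P.complex.X 0 ⟶ Nq := h - g' ≫ ι
  have hw : P.complex.d 1 0 ≫ w = 0 := by
    show P.complex.d 1 0 ≫ (h - g' ≫ ι) = 0
    rw [Preadditive.comp_sub, ← Category.assoc, hg, hfu, hu_def, sub_self]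
  obtain ⟨desc, hdesc⟩ : { d : M ⟶ Nq // π0 ≫ d = w } := Cofork.IsColimit.desc' P.isColimitCokernelCofork w (by rw [Limits.zero_comp]; exact hw)
  have hdesc' : π0 ≫ desc = w := hdesc
  have hπepi : Epi π0 := inferInstanceAs (Epi (P.π.f 0))
  have hfinal : desc ≫ modq = cM := by
    rw [← cancel_epi π0, ← Category.assoc, hdesc']
    show (h - g' ≫ ι) ≫ modq = π0 ≫ cM
    rw [Preadditive.sub_comp, Category.assoc, hι0, Limits.comp_zero, hh, sub_zero]
  refine ⟨desc.hom.toAddMonoidHom, fun x => ?_⟩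
  have := ConcreteCategory.congr_hom hfinal x
  exact this

/-! ### Extension along divisible groups -/

lemma extend_of_divisible {M : Type} [AddCommGroup M] {D : Type} [AddCommGroup D]
    [DivisibleBy D ℤ] (B : AddSubgroup M) (f : ↥B →+ D) :
    ∃ g : M →+ D, ∀ b : ↥B, g ↑b = f b := by
  have hinj : Module.Injective ℤ D := (Module.Baer.of_divisible D).injective
  obtain ⟨h, hh⟩ := hinj.out B.subtype.toIntLinearMap Subtype.coe_injective f.toIntLinearMap
  exact ⟨h.toAddMonoidHom, fun b => hh b⟩

lemma charLifts_subgroup {M : Type} [AddCommGroup M] (h : CharLifts M) (B : AddSubgroup M) :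
    CharLifts ↥B := by
  intro c
  obtain ⟨cbar, hc⟩ := extend_of_divisible B c
  obtain ⟨g, hg⟩ := h cbar
  exact ⟨g.comp B.subtype, fun x => by simpa [hc x] using hg ↑x⟩

lemma charLifts_of_equiv {M N : Type} [AddCommGroup M] [AddCommGroup N] (e : M ≃+ N)
    (h : CharLifts M) : CharLifts N := by
  intro c
  obtain ⟨g, hg⟩ := h (c.comp e.toAddMonoidHom)
  exact ⟨g.comp e.symm.toAddMonoidHom, fun x => by simpa using hg (e.symm x)⟩

lemma rat_mul_den (x : ℚ) : x * (x.den : ℚ) = (x.num : ℚ) := by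
  have h := Rat.num_div_den x
  have hd : (x.den : ℚ) ≠ 0 := Nat.cast_ne_zero.mpr x.den_nz
  rw [div_eq_iff hd] at h
  linarith

lemma int_mul_mem_int_iff (t : ℤ) (x : ℚ) :
    (∃ k : ℤ, (k : ℚ) = (t : ℚ) * x) ↔ (x.den : ℤ) ∣ t := by
  constructor
  · rintro ⟨k, hk⟩
    have hd : (x.den : ℚ) ≠ 0 := Nat.cast_ne_zero.mpr x.den_nz
    have h1 : ((t * x.num : ℤ) : ℚ) = ((k * x.den : ℤ) : ℚ) := by
      push_cast
      rw [← rat_mul_den x]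
      rw [hk]
      ring
    have h2 : t * x.num = k * x.den := by exact_mod_cast h1
    have hcop : IsCoprime ((x.den : ℤ)) x.num := by
      rw [Int.isCoprime_iff_gcd_eq_one]
      have := x.reduced
      simpa [Int.gcd, Nat.coprime_comm] using this.symm
    have hdvd : (x.den : ℤ) ∣ t * x.num := ⟨k, by linarith [h2]⟩
    exact hcop.dvd_of_dvd_mul_right hdvd
  · rintro ⟨s, hs⟩
    refine ⟨s * x.num, ?_⟩
    rw [hs]
    push_cast
    rw [← rat_mul_den x]
    ring

lemma mem_zmult_inv {d : ℕ} (hd : d ≠ 0) (x : ℚ) :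
    x ∈ AddSubgroup.zmultiples ((d : ℚ)⁻¹) ↔ (x.den : ℤ) ∣ (d : ℤ) := by
  have hdq : (d : ℚ) ≠ 0 := Nat.cast_ne_zero.mpr hd
  rw [AddSubgroup.mem_zmultiples_iff]
  constructor
  · rintro ⟨k, hk⟩
    refine (int_mul_mem_int_iff (d : ℤ) x).mp ⟨k, ?_⟩
    rw [← hk, zsmul_eq_mul]
    push_cast
    field_simp
  · intro hdvd
    obtain ⟨k, hk⟩ := (int_mul_mem_int_iff (d : ℤ) x).mpr hdvd
    refine ⟨k, ?_⟩
    rw [zsmul_eq_mul, hk]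
    push_cast
    field_simp
lemma torsionFree_of_charLifts {M : Type} [AddCommGroup M] (h : CharLifts M)
    (a : M) (n : ℤ) (hn : n ≠ 0) (hna : n • a = 0) : a = 0 := by
  by_contra ha
  set φ : ℤ →+ M := (zmultiplesHom M) a with hφ
  obtain ⟨m, hm⟩ := Int.subgroup_cyclic φ.ker
  have hker : ∀ k : ℤ, k ∈ φ.ker ↔ ∃ s : ℤ, s * m = k := by
    intro k
    rw [hm, AddSubgroup.mem_closure_singleton]
    simp [smul_eq_mul]
  have hφapp : ∀ k : ℤ, φ k = k • a := fun k => rfl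
  have hm0 : m ≠ 0 := by
    rintro rfl
    obtain ⟨s, hs⟩ := (hker n).mp (by simp [AddMonoidHom.mem_ker, hφapp, hna])
    exact hn (by simpa using hs.symm)
  have hmq : (m : ℚ) ≠ 0 := Int.cast_ne_zero.mpr hm0
  -- the character ℤ → ℚ/ℤ, k ↦ k/m
  set χ : ℤ →+ QZ := qzmk.comp ((zmultiplesHom ℚ) ((m : ℚ)⁻¹)) with hχ
  have hχapp : ∀ k : ℤ, χ k = qzmk ((k : ℚ) * (m : ℚ)⁻¹) := by
    intro k
    simp [hχ, zsmul_eq_mul]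
  have hχker : φ.ker ≤ χ.ker := by
    intro k hk
    obtain ⟨s, hs⟩ := (hker k).mp hk
    rw [AddMonoidHom.mem_ker, hχapp]
    have : ((k : ℚ)) * (m : ℚ)⁻¹ = (s : ℚ) := by
      rw [← hs]
      push_cast
      field_simp
    rw [this, qzmk_eq_zero_iff]
    exact ⟨s, rfl⟩
  set χbar : (ℤ ⧸ φ.ker) →+ QZ := QuotientAddGroup.lift φ.ker χ hχker with hχbar
  set eqv := QuotientAddGroup.quotientKerEquivRange φ with heqv
  set c' : ↥φ.range →+ QZ := χbar.comp eqv.symm.toAddMonoidHom with hc'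
  obtain ⟨T, hT⟩ := extend_of_divisible φ.range c'
  obtain ⟨g, hg⟩ := h T
  have amem : a ∈ φ.range := ⟨1, one_zsmul a⟩
  -- value of T at a
  have heq1 : eqv (((1 : ℤ) : ℤ ⧸ φ.ker)) = ⟨a, amem⟩ := by
    apply Subtype.ext
    show φ 1 = a
    exact one_zsmul a
  have hTa : T a = qzmk ((m : ℚ)⁻¹) := by
    have : T a = c' ⟨a, amem⟩ := hT ⟨a, amem⟩
    rw [this, hc']
    simp only [AddMonoidHom.comp_apply, AddEquiv.coe_toAddMonoidHom]
    rw [← heq1, AddEquiv.symm_apply_apply]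
    show χ 1 = _
    rw [hχapp]
    norm_num
  -- m • a = 0
  have hma : m • a = 0 := by
    have : m ∈ φ.ker := (hker m).mpr ⟨1, one_mul m⟩
    simpa [AddMonoidHom.mem_ker, hφapp] using this
  have hga : g a = 0 := by
    have h1 : (m : ℚ) * g a = 0 := by
      have := g.map_zsmul m a
      rw [hma, map_zero] at this
      rw [← zsmul_eq_mul]
      exact this.symm
    rcases mul_eq_zero.mp h1 with h | h
    · exact absurd h hmq
    · exact h
  have : qzmk ((m : ℚ)⁻¹) = 0 := by
    rw [← hTa, ← hg a, hga, map_zero]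
  obtain ⟨k, hk⟩ := (qzmk_eq_zero_iff _).mp this
  have hkm : k * m = 1 := by
    have : ((k * m : ℤ) : ℚ) = 1 := by
      push_cast
      rw [hk]
      field_simp
    exact_mod_cast this
  have hunit : m = 1 ∨ m = -1 := Int.isUnit_iff.mp (IsUnit.of_mul_eq_one k (by linarith [hkm, mul_comm k m]))
  have h1ker : (1 : ℤ) ∈ φ.ker := by
    rcases hunit with rfl | rfl
    · exact (hker 1).mpr ⟨1, by ring⟩
    · exact (hker 1).mpr ⟨-1, by ring⟩
  exact ha (by simpa [AddMonoidHom.mem_ker, hφapp] using h1ker)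
lemma subgroup_cyclic_of_le {q : ℚ} (Q : AddSubgroup ℚ) (hQ : Q ≤ AddSubgroup.zmultiples q) :
    ∃ z, Q = AddSubgroup.zmultiples z ∧ z ∈ Q := by
  rcases eq_or_ne q 0 with rfl | hq0
  · refine ⟨0, ?_, Q.zero_mem⟩
    apply le_antisymm
    · intro x hx
      obtain ⟨k, hk⟩ := AddSubgroup.mem_zmultiples_iff.mp (hQ hx)
      simp only [smul_zero] at hk
      simpa [← hk] using AddSubgroup.mem_zmultiples_iff.mpr ⟨0, by simp⟩
    · intro x hx
      obtain ⟨k, hk⟩ := AddSubgroup.mem_zmultiples_iff.mp hx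
      simp only [smul_zero] at hk
      rw [← hk]
      exact Q.zero_mem
  · set φ : ℤ →+ ℚ := (zmultiplesHom ℚ) q with hφ
    obtain ⟨g, hg⟩ := Int.subgroup_cyclic (Q.comap φ)
    have hmem : ∀ k : ℤ, k • q ∈ Q ↔ ∃ s : ℤ, s * g = k := by
      intro k
      have : (k ∈ Q.comap φ) ↔ k • q ∈ Q := Iff.rfl
      rw [← this, hg, AddSubgroup.mem_closure_singleton]
      simp [smul_eq_mul]
    have hgQ : g • q ∈ Q := (hmem g).mpr ⟨1, one_mul g⟩
    refine ⟨g • q, ?_, hgQ⟩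
    apply le_antisymm
    · intro x hx
      obtain ⟨k, hk⟩ := AddSubgroup.mem_zmultiples_iff.mp (hQ hx)
      obtain ⟨s, hs⟩ := (hmem k).mp (by rw [hk]; exact hx)
      rw [AddSubgroup.mem_zmultiples_iff]
      exact ⟨s, by rw [← hk, ← hs, mul_smul]⟩
    · intro x hx
      obtain ⟨k, hk⟩ := AddSubgroup.mem_zmultiples_iff.mp hx
      rw [← hk]
      exact AddSubgroup.zsmul_mem Q hgQ k

lemma subQ_hom_scalar (Q : AddSubgroup ℚ) (h1 : (1:ℚ) ∈ Q) (g : ↥Q →+ ℚ) (x : ↥Q) :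
    g x = (x : ℚ) * g ⟨1, h1⟩ := by
  have hd : ((x : ℚ).den : ℚ) ≠ 0 := Nat.cast_ne_zero.mpr (x : ℚ).den_nz
  have key : (((x : ℚ).den : ℤ)) • x = ((x : ℚ).num) • (⟨1, h1⟩ : ↥Q) := by
    apply Subtype.ext
    push_cast [AddSubgroup.coe_zsmul]
    rw [zsmul_eq_mul, zsmul_eq_mul]
    push_cast
    rw [mul_comm ((x:ℚ).den : ℚ) (x : ℚ)]
    rw [rat_mul_den]  -- needs the lemma; re-stated below
    ring
  have := congrArg g key
  rw [map_zsmul, map_zsmul] at this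
  rw [zsmul_eq_mul, zsmul_eq_mul] at this
  have hx : ((x:ℚ).den : ℚ) * g x = ((x:ℚ).num : ℚ) * g ⟨1, h1⟩ := by exact_mod_cast this
  have hnum : ((x:ℚ).num : ℚ) = (x : ℚ) * ((x:ℚ).den : ℚ) := by
    rw [← rat_mul_den (x : ℚ)]
  rw [hnum] at hx
  have hx2 : ((x : ℚ).den : ℚ) * g x = ((x : ℚ).den : ℚ) * ((x : ℚ) * g ⟨1, h1⟩) := by
    linear_combination hx
  exact mul_left_cancel₀ hd hx2

lemma cyclic_of_charLifts (Q : AddSubgroup ℚ) (h1 : (1:ℚ) ∈ Q) (hL : CharLifts ↥Q) :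
    ∃ z, Q = AddSubgroup.zmultiples z := by
  by_cases hbound : ∃ d : ℕ, d ≠ 0 ∧ Q ≤ AddSubgroup.zmultiples ((d : ℚ)⁻¹)
  · obtain ⟨d, hd, hle⟩ := hbound
    obtain ⟨z, hz, -⟩ := subgroup_cyclic_of_le Q hle
    exact ⟨z, hz⟩
  exfalso
  push_neg at hbound
  set C : ℕ → AddSubgroup ℚ :=
    fun n => Q ⊓ AddSubgroup.zmultiples (((n.factorial : ℕ) : ℚ)⁻¹) with hC
  have hfac0 : ∀ n : ℕ, n.factorial ≠ 0 := fun n => (Nat.factorial_pos n).ne'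
  have hCmem : ∀ (n : ℕ) (x : ℚ), x ∈ C n ↔ x ∈ Q ∧ (x.den : ℤ) ∣ ((n.factorial : ℕ) : ℤ) := by
    intro n x
    rw [hC]
    simp only [AddSubgroup.mem_inf]
    rw [mem_zmult_inv (hfac0 n)]
  have hgen : ∀ n, ∃ z, C n = AddSubgroup.zmultiples z ∧ z ∈ C n :=
    fun n => subgroup_cyclic_of_le (C n) inf_le_right
  choose qg hqg hqgmem using hgen
  have hqQ : ∀ n, qg n ∈ Q := fun n => ((hCmem n (qg n)).mp (hqgmem n)).1
  have h1C : ∀ n, (1:ℚ) ∈ C n := by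
    intro n
    rw [hCmem]
    exact ⟨h1, by norm_num⟩
  set v : ℕ → ℕ := fun n => (qg n).den with hv
  have hvpos : ∀ n, 0 < v n := fun n => Nat.pos_of_ne_zero (qg n).den_nz
  have hdenbound : ∀ n x, x ∈ C n → x.den ∣ v n := by
    intro n x hx
    rw [hqg n, AddSubgroup.mem_zmultiples_iff] at hx
    obtain ⟨t, ht⟩ := hx
    have : ((x.den : ℤ)) ∣ ((v n : ℕ) : ℤ) := by
      refine (int_mul_mem_int_iff ((v n : ℕ) : ℤ) x).mp ⟨t * (qg n).num, ?_⟩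
      rw [← ht, zsmul_eq_mul]
      push_cast
      rw [← rat_mul_den (qg n)]
      show (t : ℚ) * ((qg n) * ((qg n).den : ℚ)) = ((qg n).den : ℚ) * ((t : ℚ) * qg n)
      ring
    exact_mod_cast this
  have hCmono : ∀ n m, n ≤ m → C n ≤ C m := by
    intro n m hnm x hx
    rw [hCmem] at hx ⊢
    exact ⟨hx.1, hx.2.trans (Int.natCast_dvd_natCast.mpr (Nat.factorial_dvd_factorial hnm))⟩
  have hvdvd : ∀ n m, n ≤ m → v n ∣ v m := by
    intro n m hnm
    exact hdenbound m (qg n) (hCmono n m hnm (hqgmem n))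
  have hunb : ∀ n, ∃ m, n ≤ m ∧ v n < v m := by
    intro n
    have hne := hbound (v n) (hvpos n).ne'
    rw [SetLike.not_le_iff_exists] at hne
    obtain ⟨x, hxQ, hxv⟩ := hne
    have hxden : ¬ (x.den ∣ v n) := by
      intro hdvd
      exact hxv ((mem_zmult_inv (hvpos n).ne' x).mpr (Int.natCast_dvd_natCast.mpr hdvd))
    obtain ⟨m0, hm0⟩ : ∃ m0, x ∈ C m0 := by
      refine ⟨x.den, ?_⟩
      rw [hCmem]
      exact ⟨hxQ, Int.natCast_dvd_natCast.mpr
        (Nat.dvd_factorial (Nat.pos_of_ne_zero x.den_nz) le_rfl)⟩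
    refine ⟨max n m0, le_max_left _ _, ?_⟩
    have hxm : x ∈ C (max n m0) := hCmono m0 _ (le_max_right _ _) hm0
    have hdvdm : x.den ∣ v (max n m0) := hdenbound _ x hxm
    have hnd : v n ∣ v (max n m0) := hvdvd n _ (le_max_left _ _)
    rcases lt_or_ge (v n) (v (max n m0)) with h | h
    · exact h
    · exfalso
      have : v n = v (max n m0) :=
        le_antisymm (Nat.le_of_dvd (hvpos _) hnd) h
      exact hxden (this ▸ hdvdm)
  -- strictly increasing subsequence
  set N : ℕ → ℕ := fun j => Nat.rec 0 (fun j' Nj => (hunb Nj).choose) j with hN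
  have hNstep : ∀ j, N j ≤ N (j+1) ∧ v (N j) < v (N (j+1)) := by
    intro j
    have hrfl : N (j+1) = (hunb (N j)).choose := rfl
    rw [hrfl]
    exact ⟨(hunb (N j)).choose_spec.1, (hunb (N j)).choose_spec.2⟩
  have hNlt : ∀ j, N j < N (j+1) := by
    intro j
    refine lt_of_le_of_ne (hNstep j).1 (fun h => (hNstep j).2.ne (congrArg v h))
  have hNmono : ∀ i j, i ≤ j → N i ≤ N j := by
    intro i j hij
    refine Nat.le_induction le_rfl (fun j' _ ih => ih.trans (hNstep j').1) j hij
  have hNge : ∀ j, j ≤ N j := by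
    intro j
    induction j with
    | zero => exact Nat.zero_le _
    | succ j ih => exact Nat.succ_le_of_lt (lt_of_le_of_lt ih (hNlt j))
  set V : ℕ → ℕ := fun j => v (N j) with hV
  have hVlt : ∀ j, V j < V (j+1) := fun j => (hNstep j).2
  have hVdvd : ∀ i j, i ≤ j → V i ∣ V j := fun i j hij => hvdvd _ _ (hNmono i j hij)
  set enum : ℕ → ℤ := fun j => Denumerable.ofNat ℤ j with henum
  set B : ℕ → ℤ := fun j => Nat.rec 0
    (fun j' Bj => if ((V (j'+1) : ℤ) ∣ (Bj - enum j')) then Bj + (V j' : ℤ) else Bj) j with hB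
  have hBrfl : ∀ j, B (j+1) =
      if ((V (j+1) : ℤ) ∣ (B j - enum j)) then B j + (V j : ℤ) else B j := fun j => rfl
  have hBstep : ∀ j, B (j+1) = B j ∨ B (j+1) = B j + (V j : ℤ) := by
    intro j
    rw [hBrfl j]
    by_cases hd : ((V (j+1) : ℤ) ∣ (B j - enum j))
    · right; rw [if_pos hd]
    · left; rw [if_neg hd]
  have hBdiag : ∀ j, ¬ ((V (j+1) : ℤ) ∣ (B (j+1) - enum j)) := by
    intro j hdvd
    rw [hBrfl j] at hdvd
    by_cases hd : ((V (j+1) : ℤ) ∣ (B j - enum j))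
    · rw [if_pos hd] at hdvd
      have hVj : (V (j+1) : ℤ) ∣ (V j : ℤ) := by
        have := dvd_sub hdvd hd
        simpa using this
      have hle : (V (j+1) : ℤ) ≤ (V j : ℤ) :=
        Int.le_of_dvd (by exact_mod_cast hvpos (N j)) hVj
      have := hVlt j
      omega
    · rw [if_neg hd] at hdvd
      exact hd hdvd
  have hBcong : ∀ i j, i ≤ j → (V i : ℤ) ∣ (B j - B i) := by
    intro i j hij
    refine Nat.le_induction (by simp) (fun j' _ ih => ?_) j hij
    have hsplit : B (j'+1) - B i = (B (j'+1) - B j') + (B j' - B i) := by ring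
    rw [hsplit]
    refine dvd_add ?_ ih
    rcases hBstep j' with h | h
    · rw [h]; simp
    · rw [h]
      have : (V i : ℤ) ∣ (V j' : ℤ) := Int.natCast_dvd_natCast.mpr (hVdvd i j' (by omega))
      simpa using this
  have hcover : ∀ x : ↥Q, ∃ j, ((x : ℚ)) ∈ C (N j) := by
    intro x
    obtain ⟨m, hm⟩ : ∃ m, ((x:ℚ)) ∈ C m := by
      refine ⟨(x:ℚ).den, ?_⟩
      rw [hCmem]
      exact ⟨x.2, Int.natCast_dvd_natCast.mpr
        (Nat.dvd_factorial (Nat.pos_of_ne_zero (x:ℚ).den_nz) le_rfl)⟩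
    exact ⟨m, hCmono m (N m) (hNge m) hm⟩
  have hstab : ∀ (x : ℚ) (i l : ℕ), x ∈ C (N i) → i ≤ l →
      qzmk ((B l : ℚ) * x) = qzmk ((B i : ℚ) * x) := by
    intro x i l hx hil
    have hsub : qzmk ((B l : ℚ) * x - (B i : ℚ) * x) = 0 := by
      rw [qzmk_eq_zero_iff]
      obtain ⟨s, hs⟩ := hBcong i l hil
      have hx' : x ∈ AddSubgroup.zmultiples (qg (N i)) := (hqg (N i)) ▸ hx
      obtain ⟨t, ht⟩ := AddSubgroup.mem_zmultiples_iff.mp hx'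
      refine ⟨s * (t * (qg (N i)).num), ?_⟩
      have hxq : x = (t : ℚ) * qg (N i) := by rw [← ht, zsmul_eq_mul]
      have hBli : ((B l : ℚ)) - (B i : ℚ) = ((V i : ℕ) : ℚ) * (s : ℚ) := by
        exact_mod_cast congrArg (Int.cast : ℤ → ℚ) hs
      have hq : (qg (N i)) * (((V i : ℕ)) : ℚ) = ((qg (N i)).num : ℚ) := rat_mul_den _
      calc ((s * (t * (qg (N i)).num) : ℤ) : ℚ)
          = (s : ℚ) * ((t : ℚ) * ((qg (N i)).num : ℚ)) := by push_cast; ring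
        _ = (s : ℚ) * ((t : ℚ) * ((qg (N i)) * (((V i : ℕ)) : ℚ))) := by rw [hq]
        _ = (((B l : ℚ)) - (B i : ℚ)) * x := by rw [hBli, hxq]; ring
        _ = (B l : ℚ) * x - (B i : ℚ) * x := by ring
    rw [map_sub] at hsub
    exact sub_eq_zero.mp hsub
  set ix : ↥Q → ℕ := fun x => (hcover x).choose with hix
  have hixmem : ∀ x : ↥Q, ((x:ℚ)) ∈ C (N (ix x)) := fun x => (hcover x).choose_spec
  set cfun : ↥Q → QZ := fun x => qzmk ((B (ix x) : ℚ) * (x:ℚ)) with hcfun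
  have hcval : ∀ (x : ↥Q) (i : ℕ), ((x:ℚ)) ∈ C (N i) → cfun x = qzmk ((B i : ℚ) * (x:ℚ)) := by
    intro x i hxi
    rw [hcfun]
    dsimp only
    rw [← hstab (x:ℚ) (ix x) (max i (ix x)) (hixmem x) (le_max_right _ _),
        ← hstab (x:ℚ) i (max i (ix x)) hxi (le_max_left _ _)]
  have hcadd : ∀ x y : ↥Q, cfun (x + y) = cfun x + cfun y := by
    intro x y
    set l := max (ix (x+y)) (max (ix x) (ix y)) with hl
    have hmem : ∀ (z : ↥Q), ((z:ℚ)) ∈ C (N (ix z)) → ix z ≤ l → ((z:ℚ)) ∈ C (N l) :=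
      fun z hz hzl => hCmono _ _ (hNmono _ _ hzl) hz
    rw [hcval (x+y) l (hmem _ (hixmem _) (le_max_left _ _)),
        hcval x l (hmem _ (hixmem _) ((le_max_left _ _).trans (le_max_right _ _))),
        hcval y l (hmem _ (hixmem _) ((le_max_right _ _).trans (le_max_right _ _)))]
    rw [← map_add]
    congr 1
    push_cast
    ring
  set c : ↥Q →+ QZ := AddMonoidHom.mk' cfun hcadd with hcdef
  obtain ⟨g, hg⟩ := hL c
  set r := g ⟨1, h1⟩ with hr
  have hrZ : qzmk r = 0 := by
    have h1v := hg ⟨1, h1⟩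
    rw [subQ_hom_scalar Q h1 g ⟨1, h1⟩] at h1v
    have hc1 : c ⟨1, h1⟩ = 0 := by
      have h0 : cfun ⟨1, h1⟩ = qzmk ((B 0 : ℚ) * ((1:ℚ))) := hcval ⟨1, h1⟩ 0 (h1C (N 0))
      have hB0 : B 0 = 0 := rfl
      show cfun ⟨1, h1⟩ = 0
      rw [h0, hB0]
      simpa using qzmk.map_zero
    rw [hc1] at h1v
    simpa [hr] using h1v
  obtain ⟨ρ, hρ⟩ := (qzmk_eq_zero_iff r).mp hrZ
  obtain ⟨j, hj⟩ : ∃ j, enum j = ρ := ⟨Encodable.encode ρ, by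
    simp only [henum, Denumerable.ofNat_encode]⟩
  set x : ↥Q := ⟨qg (N (j+1)), hqQ _⟩ with hx
  have hcx : c x = qzmk ((B (j+1) : ℚ) * (x:ℚ)) := hcval x (j+1) (hqgmem (N (j+1)))
  have hgx := hg x
  rw [subQ_hom_scalar Q h1 g x, hcx] at hgx
  have hzero : qzmk ((B (j+1) : ℚ) * (x:ℚ) - (x:ℚ) * r) = 0 := by
    rw [map_sub, hgx, sub_self]
  rw [qzmk_eq_zero_iff] at hzero
  obtain ⟨k, hk⟩ := hzero
  have hk' : ((k:ℚ)) = ((B (j+1) - ρ : ℤ) : ℚ) * (x:ℚ) := by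
    rw [hk]
    push_cast
    rw [← hρ]
    ring
  have hdvd : (((x:ℚ).den : ℤ)) ∣ (B (j+1) - ρ) := (int_mul_mem_int_iff _ _).mp ⟨k, hk'⟩
  have hdenx : ((x:ℚ).den) = V (j+1) := rfl
  refine hBdiag j ?_
  rw [hj]
  rw [← hdenx]
  exact hdvd

lemma exists_int_hom {M : Type} [AddCommGroup M] (u : M →+ ℚ)
    (h : ∀ x, ∃ k : ℤ, (k : ℚ) = u x) :
    ∃ H : M →+ ℤ, ∀ x, ((H x : ℤ) : ℚ) = u x := by
  have hden : ∀ x, (u x).den = 1 := by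
    intro x
    obtain ⟨k, hk⟩ := h x
    rw [← hk]
    exact Rat.den_intCast k
  have hcast : ∀ x, (((u x).num : ℤ) : ℚ) = u x :=
    fun x => Rat.coe_int_num_of_den_eq_one (hden x)
  refine ⟨AddMonoidHom.mk' (fun x => (u x).num) ?_, ?_⟩
  · intro x y
    apply @Int.cast_injective ℚ _
    push_cast
    rw [hcast, hcast, hcast, map_add]
  · intro x
    exact hcast x

lemma div_char {M : Type} [AddCommGroup M]
    (htf : ∀ (x : M) (n : ℤ), n ≠ 0 → n • x = 0 → x = 0)
    (c : M →+ QZ) (n : ℤ) (hn : n ≠ 0) : ∃ c' : M →+ QZ, ∀ x, n • (c' x) = c x := by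
  set φ : M →+ M := zsmulAddGroupHom n with hφ
  have hφapp : ∀ x, φ x = n • x := fun x => rfl
  have hinj : Function.Injective φ := by
    intro x y hxy
    have : n • (x - y) = 0 := by
      rw [smul_sub]
      rw [hφapp, hφapp] at hxy
      rw [hxy, sub_self]
    have := htf _ n hn this
    exact sub_eq_zero.mp this
  set eqv : M ≃+ ↥φ.range := AddMonoidHom.ofInjective hinj with heqv
  set c0 : ↥φ.range →+ QZ := c.comp eqv.symm.toAddMonoidHom with hc0
  obtain ⟨c', hc'⟩ := extend_of_divisible φ.range c0
  refine ⟨c', fun x => ?_⟩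
  have h1 : ((eqv x : ↥φ.range) : M) = n • x := rfl
  have h2 : c' ((eqv x : ↥φ.range) : M) = c0 (eqv x) := hc' (eqv x)
  rw [h1] at h2
  rw [AddMonoidHom.map_zsmul c' n x] at h2
  rw [h2, hc0]
  simp [heqv]

theorem nunke_charLifts {A : Type} [AddCommGroup A]
    (hCL : CharLifts A) (hHom : Subsingleton (A →+ ℤ)) : Subsingleton A := by
  by_contra hns
  rw [not_subsingleton_iff_nontrivial] at hns
  obtain ⟨a, ha⟩ := exists_ne (0 : A)
  have htf : ∀ (x : A) (n : ℤ), n ≠ 0 → n • x = 0 → x = 0 :=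
    fun x n hn h => torsionFree_of_charLifts hCL x n hn h
  set P : AddSubgroup A :=
    { carrier := {x | ∃ n : ℤ, n ≠ 0 ∧ ∃ k : ℤ, n • x = k • a}
      zero_mem' := ⟨1, one_ne_zero, 0, by simp⟩
      add_mem' := by
        rintro x y ⟨n, hn, k, hk⟩ ⟨m, hm, l, hl⟩
        refine ⟨n * m, mul_ne_zero hn hm, m * k + n * l, ?_⟩
        have h1 : (n * m) • x = (m * k) • a := by
          rw [mul_comm n m, mul_smul, hk, ← mul_smul]
        have h2 : (n * m) • y = (n * l) • a := by
          rw [mul_smul, hl, ← mul_smul]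
        rw [smul_add, h1, h2, ← add_smul]
      neg_mem' := by
        rintro x ⟨n, hn, k, hk⟩
        exact ⟨n, hn, -k, by rw [smul_neg, hk, neg_smul]⟩ } with hP
  have haP : a ∈ P := ⟨1, one_ne_zero, 1, rfl⟩
  have wd : ∀ (x : A) (n k n' k' : ℤ), n ≠ 0 → n' ≠ 0 → n • x = k • a → n' • x = k' • a →
      (k : ℚ) / (n : ℚ) = (k' : ℚ) / (n' : ℚ) := by
    intro x n k n' k' hn hn' hk hk'
    have h1 : (n' * k) • a = (n * k') • a := by
      rw [mul_smul, ← hk, ← mul_smul, mul_comm n' n, mul_smul, hk', ← mul_smul]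
    have h0 : (n' * k - n * k') • a = 0 := by
      rw [sub_smul, h1, sub_self]
    have key : n' * k = n * k' := by
      by_contra hne
      exact ha (htf a _ (sub_ne_zero.mpr hne) h0)
    rw [div_eq_div_iff (Int.cast_ne_zero.mpr hn) (Int.cast_ne_zero.mpr hn')]
    have : ((n' * k : ℤ) : ℚ) = ((n * k' : ℤ) : ℚ) := by exact_mod_cast key
    push_cast at this
    linarith
  have hmem : ∀ x : ↥P, ∃ n : ℤ, n ≠ 0 ∧ ∃ k : ℤ, n • (x : A) = k • a := fun x => x.2
  set e0 : ↥P → ℚ := fun x =>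
    ((hmem x).choose_spec.2.choose : ℚ) / ((hmem x).choose : ℚ) with he0
  have he0spec : ∀ (x : ↥P) (n k : ℤ), n ≠ 0 → n • (x : A) = k • a → e0 x = (k : ℚ) / n :=
    fun x n k hn hk => wd (x : A) _ _ n k (hmem x).choose_spec.1 hn
      (hmem x).choose_spec.2.choose_spec hk
  have he0add : ∀ x y : ↥P, e0 (x + y) = e0 x + e0 y := by
    intro x y
    obtain ⟨n, hn, k, hk⟩ := hmem x
    obtain ⟨m, hm, l, hl⟩ := hmem y
    have hxy : (n * m) • ((x + y : ↥P) : A) = (m * k + n * l) • a := by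
      rw [AddSubgroup.coe_add]
      have h1 : (n * m) • (x : A) = (m * k) • a := by
        rw [mul_comm n m, mul_smul, hk, ← mul_smul]
      have h2 : (n * m) • (y : A) = (n * l) • a := by
        rw [mul_smul, hl, ← mul_smul]
      rw [smul_add, h1, h2, ← add_smul]
    rw [he0spec (x + y) _ _ (mul_ne_zero hn hm) hxy, he0spec x n k hn hk,
      he0spec y m l hm hl]
    have hnq : (n : ℚ) ≠ 0 := Int.cast_ne_zero.mpr hn
    have hmq : (m : ℚ) ≠ 0 := Int.cast_ne_zero.mpr hm
    push_cast
    field_simp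
  set e : ↥P →+ ℚ := AddMonoidHom.mk' e0 he0add with he
  have heinj : Function.Injective e := by
    intro x y hxy
    have h0 : e (x - y) = 0 := by rw [map_sub, hxy, sub_self]
    obtain ⟨n, hn, k, hk⟩ := hmem (x - y)
    have hval : e0 (x - y) = (k : ℚ) / n := he0spec _ n k hn hk
    rw [show e (x - y) = e0 (x - y) from rfl, hval] at h0
    have hk0 : k = 0 := by
      have := div_eq_zero_iff.mp h0
      rcases this with h | h
      · exact_mod_cast h
      · exact absurd h (Int.cast_ne_zero.mpr hn)
    rw [hk0, zero_smul] at hk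
    have hx0 : ((x - y : ↥P) : A) = 0 := htf _ n hn hk
    have : (x - y : ↥P) = 0 := by
      apply Subtype.ext
      simpa using hx0
    exact sub_eq_zero.mp this
  have hea : e ⟨a, haP⟩ = 1 := by
    have h1 : e0 ⟨a, haP⟩ = (1 : ℚ) / 1 := he0spec _ 1 1 one_ne_zero rfl
    show e0 ⟨a, haP⟩ = 1
    rw [h1]
    norm_num
  have hCLP : CharLifts ↥P := charLifts_subgroup hCL P
  set eqv : ↥P ≃+ ↥e.range := AddMonoidHom.ofInjective heinj with heqv
  have hCLR : CharLifts ↥e.range := charLifts_of_equiv eqv hCLP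
  have h1R : (1 : ℚ) ∈ e.range := ⟨⟨a, haP⟩, hea⟩
  obtain ⟨z, hz⟩ := cyclic_of_charLifts e.range h1R hCLR
  have hzR : z ∈ e.range := by rw [hz]; exact AddSubgroup.mem_zmultiples z
  obtain ⟨b, hb⟩ := hzR
  have hz0 : z ≠ 0 := by
    intro h0
    have h1' := h1R
    rw [hz, h0, AddSubgroup.mem_zmultiples_iff] at h1'
    obtain ⟨s, hs⟩ := h1'
    simpa using hs
  have hgen : ∀ x : ↥P, ∃ s : ℤ, x = s • b := by
    intro x
    have hxr : e x ∈ e.range := ⟨x, rfl⟩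
    rw [hz, AddSubgroup.mem_zmultiples_iff] at hxr
    obtain ⟨s, hs⟩ := hxr
    refine ⟨s, heinj ?_⟩
    rw [map_zsmul, hb]
    exact hs.symm
  have hbuniq : ∀ s s' : ℤ, s • b = s' • b → s = s' := by
    intro s s' hss
    have hcong := congrArg e hss
    rw [map_zsmul, map_zsmul, hb, zsmul_eq_mul, zsmul_eq_mul] at hcong
    have : (s : ℚ) = s' := mul_right_cancel₀ hz0 hcong
    exact_mod_cast this
  set f0 : ↥P → ℤ := fun x => (hgen x).choose with hf0
  have hf0spec : ∀ x : ↥P, x = (f0 x) • b := fun x => (hgen x).choose_spec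
  have hf0add : ∀ x y, f0 (x + y) = f0 x + f0 y := by
    intro x y
    apply hbuniq
    rw [← hf0spec (x + y), add_smul, ← hf0spec x, ← hf0spec y]
  set f : ↥P →+ ℤ := AddMonoidHom.mk' f0 hf0add with hf
  have hfb : f b = 1 := by
    apply hbuniq
    rw [one_smul]
    exact (hf0spec b).symm
  obtain ⟨F, hF⟩ := extend_of_divisible P ((Int.castAddHom ℚ).comp f)
  have hFP : ∀ p : ↥P, F ↑p = ((f p : ℤ) : ℚ) := fun p => hF p
  have hFkill : ∀ p : A, p ∈ P → qzmk (F p) = 0 := by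
    intro p hp
    rw [hFP ⟨p, hp⟩, qzmk_eq_zero_iff]
    exact ⟨_, rfl⟩
  set c : (A ⧸ P) →+ QZ := QuotientAddGroup.lift P (qzmk.comp F)
      (fun p hp => by
        rw [AddMonoidHom.mem_ker, AddMonoidHom.comp_apply]
        exact hFkill p hp) with hcq
  have hcmk : ∀ x : A, c ((x : A ⧸ P)) = qzmk (F x) := fun x =>
    QuotientAddGroup.lift_mk P _ x
  have hqtf : ∀ (y : A ⧸ P) (n : ℤ), n ≠ 0 → n • y = 0 → y = 0 := by
    intro y n hn hny
    induction y using QuotientAddGroup.induction_on with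
    | H x =>
      have hmkx : ((n • x : A) : A ⧸ P) = 0 := by
        rw [← hny]
        exact AddMonoidHom.map_zsmul (QuotientAddGroup.mk' P) n x
      rw [QuotientAddGroup.eq_zero_iff] at hmkx
      obtain ⟨m, hm, k, hmk⟩ := hmkx
      have : x ∈ P := by
        refine ⟨m * n, mul_ne_zero hm hn, k, ?_⟩
        rw [mul_smul]
        exact hmk
      rw [QuotientAddGroup.eq_zero_iff]
      exact this
  obtain ⟨c', hc'⟩ := div_char hqtf c 2 two_ne_zero
  set χ : A →+ QZ := c'.comp (QuotientAddGroup.mk' P) with hχ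
  obtain ⟨g, hgl⟩ := hCL χ
  set u : A →+ ℚ := F - (2 : ℤ) • g with hu
  have huapp : ∀ x : A, u x = F x - (2 : ℤ) • g x := fun x => rfl
  have huZ : ∀ x, ∃ k : ℤ, (k : ℚ) = u x := by
    intro x
    have h1 : qzmk (u x) = 0 := by
      rw [huapp, map_sub, map_zsmul, hgl]
      have hχx : χ x = c' ((x : A ⧸ P)) := rfl
      rw [hχx, hc' ((x : A ⧸ P)), hcmk, sub_self]
    exact (qzmk_eq_zero_iff _).mp h1
  obtain ⟨H, hH⟩ := exists_int_hom u huZ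
  have hu0 : ∀ x, u x = 0 := by
    intro x
    rw [← hH x, Subsingleton.elim H 0]
    simp
  have hFb : F ↑b = 1 := by
    rw [hFP b]
    rw [hfb]
    norm_num
  have hub := hu0 ↑b
  rw [huapp, hFb] at hub
  have hgb : qzmk (g ↑b) = 0 := by
    rw [hgl]
    have hbP : ((b : A) : A ⧸ P) = 0 := (QuotientAddGroup.eq_zero_iff _).mpr b.2
    show c' (((b : A) : A ⧸ P)) = 0
    rw [hbP, map_zero]
  obtain ⟨k, hk⟩ := (qzmk_eq_zero_iff _).mp hgb
  have h2k : (1 : ℚ) = 2 * k := by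
    have : (2 : ℤ) • g ↑b = 2 * (k : ℚ) := by
      rw [zsmul_eq_mul, ← hk]
      norm_num
    linarith [hub, this]
  have h2k' : (1 : ℤ) = 2 * k := by exact_mod_cast h2k
  omega


/-- Nunke's theorem (algebraic core): an abelian group `A` with `Hom(A, ℤ) = 0` and
`Ext¹(A, ℤ) = 0` is trivial. -/
theorem nunke (A : Type) [AddCommGroup A]
    (hHom : Subsingleton (A →+ ℤ))
    (hExt : Subsingleton (((Ext ℤ (ModuleCat ℤ) 1).obj
      (Opposite.op (ModuleCat.of ℤ A))).obj (ModuleCat.of ℤ ℤ))) :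
    Subsingleton A := by
  exact nunke_charLifts (charLifts_of_extVanish A hExt) hHom

end
end
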